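/- arXiv:2507.08354 — 9 statements merged into one kernel-verified Lean document; each statement's English description precedes it below -/
import Mathlib

section
/- Let A = {A_i}_{1 ≤ i ≤ n+1} be a polygon in ℝ^N. Then the first variation identity holds: for every continuously differentiable, compactly supported vector field θ : ℝ^N → ℝ^N, one has ∑_{i=1}^n ∫_{[A_i,A_{i+1}]} ⟪Dθ(x) τ_i, τ_i⟫ dℋ¹(x) = ∑_{i=1}^n ⟪θ(A_i), H_i⟫, where Dθ(x) denotes the (Fréchet) derivative of θ at x and ℋ¹ is the 1-dimensional Hausdorff measure on ℝ^N. -/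
open MeasureTheory
open scoped RealInnerProductSpace ENNReal NNReal

noncomputable section

/-- The length of the `i`-th side of the polygon with vertices `A` (indices cyclic). -/
def polyLen {N n : ℕ} (A : ZMod n → EuclideanSpace ℝ (Fin N)) (i : ZMod n) : ℝ :=
  ‖A (i + 1) - A i‖

/-- The unit tangent vector of the `i`-th side of the polygon with vertices `A`. -/
def polyTau {N n : ℕ} (A : ZMod n → EuclideanSpace ℝ (Fin N)) (i : ZMod n) :
    EuclideanSpace ℝ (Fin N) :=
  ‖A (i + 1) - A i‖⁻¹ • (A (i + 1) - A i)

/-- The curvature vector of the polygon with vertices `A` at the vertex `A i`. -/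
def polyH {N n : ℕ} (A : ZMod n → EuclideanSpace ℝ (Fin N)) (i : ZMod n) :
    EuclideanSpace ℝ (Fin N) :=
  ‖A i - A (i - 1)‖⁻¹ • (A i - A (i - 1)) + ‖A i - A (i + 1)‖⁻¹ • (A i - A (i + 1))

/-- `A` (a cyclic list of vertices) is a polygon: there are at least 3 vertices, consecutive
vertices are distinct, open sides do not meet each other, and a vertex belongs only to its
two consecutive (closed) sides. -/
def IsPolygon {N n : ℕ} [NeZero n] (A : ZMod n → EuclideanSpace ℝ (Fin N)) : Prop :=
  3 ≤ n ∧
  (∀ i, A (i + 1) ≠ A i) ∧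
  (∀ i j : ZMod n, i ≠ j →
    openSegment ℝ (A i) (A (i + 1)) ∩ openSegment ℝ (A j) (A (j + 1)) = ∅) ∧
  (∀ i j : ZMod n, A i ∈ segment ℝ (A j) (A (j + 1)) → j = i ∨ j = i - 1)

/-!
Parametrizing the side `[x, y]` by `lineMap x y`, the measure `ℋ¹` on it is `‖y - x‖` times
Lebesgue measure on `[0, 1]`, so the fundamental theorem of calculus turns the integral over the
side into `⟪θ y - θ x, τ⟫`. Summing over the sides and shifting the index in the `θ (A (i + 1))`
terms gives `∑ ⟪θ (A i), τ (i - 1) - τ i⟫`, and `τ (i - 1) - τ i` is the curvature vector.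
-/

open Set AffineMap TopologicalSpace

section Segment

variable {E F : Type*} [NormedAddCommGroup E] [NormedSpace ℝ E]

theorem restrict_segment_hausdorffMeasure [MeasurableSpace E] [BorelSpace E] (x y : E) :
    μH[1].restrict (segment ℝ x y) =
      edist x y • (volume.restrict (Icc (0 : ℝ) 1)).map (lineMap x y) := by
  have hp : Measurable (lineMap x y : ℝ → E) := lineMap_continuous.measurable
  ext s hs
  rw [Measure.restrict_apply hs, Measure.smul_apply, Measure.map_apply hp hs,
    Measure.restrict_apply (hp hs), segment_eq_image_lineMap, ← image_preimage_inter,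
    hausdorffMeasure_lineMap_image, hausdorffMeasure_real, edist_nndist]
  rfl

theorem setIntegral_segment_hausdorffMeasure [MeasurableSpace E] [BorelSpace E]
    [SecondCountableTopology E]
    [NormedAddCommGroup F] [NormedSpace ℝ F] (x y : E) {g : E → F} (hg : Continuous g) :
    ∫ z in segment ℝ x y, g z ∂μH[1] = dist x y • ∫ t in (0 : ℝ)..1, g (lineMap x y t) := by
  rw [restrict_segment_hausdorffMeasure, integral_smul_measure,
    integral_map lineMap_continuous.aemeasurable hg.aestronglyMeasurable,
    intervalIntegral.integral_of_le zero_le_one, integral_Icc_eq_integral_Ioc, dist_edist]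

theorem hasDerivAt_comp_lineMap [NormedAddCommGroup F] [NormedSpace ℝ F] {f : E → F}
    {x y : E} {t : ℝ} (hf : DifferentiableAt ℝ f (lineMap x y t)) :
    HasDerivAt (fun s : ℝ => f (lineMap x y s)) (fderiv ℝ f (lineMap x y t) (y - x)) t :=
  hf.hasFDerivAt.comp_hasDerivAt t (hasDerivAt_lineMap (a := x) (b := y))

theorem integral_fderiv_lineMap [NormedAddCommGroup F] [NormedSpace ℝ F] [CompleteSpace F]
    {f : E → F} (hf : ContDiff ℝ 1 f) (x y : E) :
    ∫ t in (0 : ℝ)..1, fderiv ℝ f (lineMap x y t) (y - x) = f y - f x := by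
  have hcont : Continuous fun t : ℝ => fderiv ℝ f (lineMap x y t) (y - x) :=
    ((hf.continuous_fderiv one_ne_zero).comp lineMap_continuous).clm_apply continuous_const
  rw [intervalIntegral.integral_eq_sub_of_hasDerivAt
    (fun t _ => hasDerivAt_comp_lineMap (hf.differentiable one_ne_zero _))
    (hcont.intervalIntegrable _ _), lineMap_apply_one, lineMap_apply_zero]

end Segment

section InnerProduct

variable {E : Type*} [NormedAddCommGroup E] [InnerProductSpace ℝ E]

theorem setIntegral_segment_inner_fderiv [CompleteSpace E] [MeasurableSpace E] [BorelSpace E]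
    [SecondCountableTopology E] {θ : E → E} (hθ : ContDiff ℝ 1 θ) (x y : E) :
    ∫ z in segment ℝ x y, ⟪fderiv ℝ θ z (‖y - x‖⁻¹ • (y - x)), ‖y - x‖⁻¹ • (y - x)⟫ ∂μH[1] =
      ⟪θ y - θ x, ‖y - x‖⁻¹ • (y - x)⟫ := by
  set τ := ‖y - x‖⁻¹ • (y - x)
  have hDθ : Continuous (fderiv ℝ θ) := hθ.continuous_fderiv one_ne_zero
  have hτ : ‖y - x‖ • τ = y - x := by
    rcases eq_or_ne (y - x) 0 with h | h
    · simp [τ, h]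
    · exact smul_inv_smul₀ (norm_ne_zero_iff.mpr h) _
  have hscale (z : E) : dist x y * ⟪fderiv ℝ θ z τ, τ⟫ = ⟪fderiv ℝ θ z (y - x), τ⟫ := by
    rw [dist_comm, dist_eq_norm, ← real_inner_smul_left, ← map_smul, hτ]
  have hint : IntervalIntegrable (fun t : ℝ => fderiv ℝ θ (lineMap x y t) (y - x)) volume 0 1 :=
    ((hDθ.comp lineMap_continuous).clm_apply continuous_const).intervalIntegrable _ _
  rw [setIntegral_segment_hausdorffMeasure x y ((hDθ.clm_apply continuous_const).inner
    continuous_const), smul_eq_mul, ← intervalIntegral.integral_const_mul]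
  simp only [hscale]
  rw [← integral_fderiv_lineMap hθ x y]
  simpa only [innerSL_apply_apply, real_inner_comm τ] using
    (innerSL ℝ τ).intervalIntegral_comp_comm hint

theorem sum_inner_sub_shift {G : Type*} [AddGroup G] [Fintype G] (f g : G → E) (c : G) :
    ∑ i, ⟪f (i + c) - f i, g i⟫ = ∑ i, ⟪f i, g (i - c) - g i⟫ := by
  simp only [inner_sub_left, inner_sub_right, Finset.sum_sub_distrib]
  congr 1
  exact Fintype.sum_equiv (Equiv.addRight c) _ _ fun i => by simp

end InnerProduct

theorem polyH_eq_polyTau_sub {N n : ℕ} (A : ZMod n → EuclideanSpace ℝ (Fin N)) (i : ZMod n) :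
    polyH A i = polyTau A (i - 1) - polyTau A i := by
  rw [polyH, polyTau, polyTau, sub_add_cancel, ← neg_sub (A (i + 1)) (A i), norm_neg, smul_neg,
    ← sub_eq_add_neg]

theorem polygon_first_variation_general {N n : ℕ} [NeZero n]
    (A : ZMod n → EuclideanSpace ℝ (Fin N))
    (θ : EuclideanSpace ℝ (Fin N) → EuclideanSpace ℝ (Fin N))
    (hθ : ContDiff ℝ 1 θ) :
    ∑ i : ZMod n, ∫ x in segment ℝ (A i) (A (i + 1)),
        ⟪fderiv ℝ θ x (polyTau A i), polyTau A i⟫ ∂(μH[1]) =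
      ∑ i : ZMod n, ⟪θ (A i), polyH A i⟫ := by
  simp only [polyTau, setIntegral_segment_inner_fderiv hθ, polyH_eq_polyTau_sub]
  exact sum_inner_sub_shift (θ ∘ A) (polyTau A) 1

/-- **First variation of the varifold associated to a polygon**:
for any compactly supported `C¹` vector field `θ`,
`∑ᵢ ∫_{[Aᵢ, Aᵢ₊₁]} ⟪Dθ(x) τᵢ, τᵢ⟫ dℋ¹(x) = ∑ᵢ ⟪θ(Aᵢ), Hᵢ⟫`. -/
theorem polygon_first_variation {N n : ℕ} [NeZero n]
    (A : ZMod n → EuclideanSpace ℝ (Fin N)) (hA : IsPolygon A)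
    (θ : EuclideanSpace ℝ (Fin N) → EuclideanSpace ℝ (Fin N))
    (hθ : ContDiff ℝ 1 θ) (hθc : HasCompactSupport θ) :
    ∑ i : ZMod n, ∫ x in segment ℝ (A i) (A (i + 1)),
        ⟪fderiv ℝ θ x (polyTau A i), polyTau A i⟫ ∂(μH[1]) =
      ∑ i : ZMod n, ⟪θ (A i), polyH A i⟫ :=
  polygon_first_variation_general A θ hθ
end
end

section
/- Let A = {A_i}_{1 ≤ i ≤ n+1} be a polygon in ℝ^N. Then the Hsiung–Minkowski type identity holds: ∑_{i=1}^n ⟪A_i, H_i⟫ = ∑_{i=1}^n ℓ_i, i.e. the sum of the inner products of the vertices with their curvature vectors equals the perimeter of the polygon. -/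
open MeasureTheory
open scoped RealInnerProductSpace ENNReal NNReal

noncomputable section

/-- The first nonzero "eigenvalue" `λ₁ᴬ` of the polygon with vertices `A`, defined as the
infimum of the Rayleigh quotients
`(∑ i, ∫_{[Aᵢ, Aᵢ₊₁]} |∇_P u|² dℋ¹) / (∑ i, u (Aᵢ)²)` over smooth functions `u : ℝᴺ → ℝ`
with `∑ i, u (Aᵢ) = 0` and `∑ i, u (Aᵢ)² ≠ 0`, where `∇_P u (x) = ⟪∇u(x), τᵢ⟫ τᵢ` is the
tangential gradient of `u` along the side `[Aᵢ, Aᵢ₊₁]`. -/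
def polyLambda1 {N n : ℕ} [NeZero n] (A : ZMod n → EuclideanSpace ℝ (Fin N)) : ℝ :=
  sInf { r : ℝ | ∃ u : EuclideanSpace ℝ (Fin N) → ℝ, ContDiff ℝ (⊤ : ℕ∞) u ∧
    (∑ i, u (A i)) = 0 ∧ (∑ i, u (A i) ^ 2) ≠ 0 ∧
    r = (∑ i, ∫ x in segment ℝ (A i) (A (i + 1)),
          ‖(fderiv ℝ u x (polyTau A i)) • polyTau A i‖ ^ 2 ∂(μH[1])) /
        (∑ i, u (A i) ^ 2) }

/-- **Hsiung–Minkowski type identity for polygons**: the sum of the inner products of the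
vertices with their curvature vectors equals the perimeter, `∑ᵢ ⟪Aᵢ, Hᵢ⟫ = ∑ᵢ ℓᵢ`. -/
theorem polygon_hsiung_minkowski {N n : ℕ} [NeZero n]
    (A : ZMod n → EuclideanSpace ℝ (Fin N)) (hA : IsPolygon A) :
    ∑ i : ZMod n, ⟪A i, polyH A i⟫ = ∑ i : ZMod n, polyLen A i := by
  have hne := hA.2.1
  have key : ∀ i : ZMod n, ⟪A i, polyH A i⟫ =
      ⟪A i, polyTau A (i - 1)⟫ - ⟪A i, polyTau A i⟫ := by
    intro i
    have h1 : A i - A (i - 1) = A (i - 1 + 1) - A (i - 1) := by ring_nf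
    rw [polyH, polyTau, polyTau, inner_add_right]
    have h2 : ‖A i - A (i + 1)‖⁻¹ • (A i - A (i + 1)) =
        -(‖A (i + 1) - A i‖⁻¹ • (A (i + 1) - A i)) := by
      rw [← norm_neg, neg_sub, ← smul_neg, neg_sub]
    rw [h1, h2, inner_neg_right]
    ring
  simp_rw [key, Finset.sum_sub_distrib]
  have hshift : ∑ i : ZMod n, ⟪A i, polyTau A (i - 1)⟫ =
      ∑ i : ZMod n, ⟪A (i + 1), polyTau A i⟫ := by
    exact (Fintype.sum_equiv (Equiv.addRight 1) _ _ (fun i => by simp)).symm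
  rw [hshift, ← Finset.sum_sub_distrib]
  apply Finset.sum_congr rfl
  intro i _
  rw [← inner_sub_left, polyTau, real_inner_smul_right, real_inner_self_eq_norm_sq,
    polyLen]
  have h : ‖A (i + 1) - A i‖ ≠ 0 := by
    simpa [sub_eq_zero] using hne i
  field_simp
end
end

section
/- Reilly inequality for polygons: let A = {A_i}_{1 ≤ i ≤ n+1} be a polygon in ℝ^N. Then ℋ¹(K_A) · λ_1^A ≤ ∑_{i=1}^n |H_i|², where ℋ¹(K_A) = ∑_{i=1}^n ℓ_i is the total length of the polygon. -/
open MeasureTheory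
open scoped RealInnerProductSpace ENNReal NNReal

noncomputable section

/-- **Reilly inequality for polygons**: `ℋ¹(K_A) ⬝ λ₁ᴬ ≤ ∑ᵢ |Hᵢ|²`, where
`ℋ¹(K_A) = ∑ᵢ ℓᵢ` is the total length of the polygon. -/
theorem reilly_polygon {N n : ℕ} [NeZero n]
    (A : ZMod n → EuclideanSpace ℝ (Fin N)) (hA : IsPolygon A) :
    (∑ i : ZMod n, polyLen A i) * polyLambda1 A ≤ ∑ i : ZMod n, ‖polyH A i‖ ^ 2 := by

  obtain ⟨hn3, hne, -, -⟩ := hA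
  set c : EuclideanSpace ℝ (Fin N) := (n : ℝ)⁻¹ • ∑ i, A i with hc
  set L : ℝ := ∑ i : ZMod n, polyLen A i with hL
  set S : ℝ := ∑ i : ZMod n, ‖polyH A i‖ ^ 2 with hS
  have hsub : ∀ i, A (i + 1) - A i ≠ 0 := fun i => sub_ne_zero.mpr (hne i)
  have hτ : ∀ i, ‖polyTau A i‖ = 1 := by
    intro i
    rw [polyTau, norm_smul, norm_inv, norm_norm,
      inv_mul_cancel₀ (norm_ne_zero_iff.mpr (hsub i))]
  -- sum of vertices minus centroid is zero
  have hcent : (∑ i, (A i - c)) = 0 := by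
    have hn0 : (n : ℝ) ≠ 0 := Nat.cast_ne_zero.mpr (NeZero.ne n)
    have hcard : (Finset.univ : Finset (ZMod n)).card = n := by
      simp [ZMod.card]
    rw [Finset.sum_sub_distrib, Finset.sum_const, hcard, hc,
      ← Nat.cast_smul_eq_nsmul ℝ, smul_smul, mul_inv_cancel₀ hn0, one_smul, sub_self]
  -- the admissible set is bounded below by 0
  have hbdd : ∀ r ∈ { r : ℝ | ∃ u : EuclideanSpace ℝ (Fin N) → ℝ, ContDiff ℝ (⊤ : ℕ∞) u ∧
      (∑ i, u (A i)) = 0 ∧ (∑ i, u (A i) ^ 2) ≠ 0 ∧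
      r = (∑ i, ∫ x in segment ℝ (A i) (A (i + 1)),
            ‖(fderiv ℝ u x (polyTau A i)) • polyTau A i‖ ^ 2 ∂(μH[1])) /
          (∑ i, u (A i) ^ 2) }, (0:ℝ) ≤ r := by
    rintro r ⟨u, -, -, -, rfl⟩
    apply div_nonneg
    · exact Finset.sum_nonneg fun i _ => integral_nonneg fun x => by positivity
    · exact Finset.sum_nonneg fun i _ => sq_nonneg _
  -- main per-direction inequality
  have hkey : ∀ v : EuclideanSpace ℝ (Fin N),
      polyLambda1 A * (∑ i, ⟪v, A i - c⟫ ^ 2) ≤ ∑ i, polyLen A i * ⟪v, polyTau A i⟫ ^ 2 := by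
    intro v
    have hNnonneg : (0:ℝ) ≤ ∑ i, polyLen A i * ⟪v, polyTau A i⟫ ^ 2 :=
      Finset.sum_nonneg fun i _ => mul_nonneg (norm_nonneg _) (sq_nonneg _)
    by_cases hD : (∑ i, ⟪v, A i - c⟫ ^ 2) = 0
    · rw [hD, mul_zero]; exact hNnonneg
    · have hDpos : 0 < ∑ i, ⟪v, A i - c⟫ ^ 2 :=
        lt_of_le_of_ne (Finset.sum_nonneg fun i _ => sq_nonneg _) (Ne.symm hD)
      set u : EuclideanSpace ℝ (Fin N) → ℝ := fun x => (innerSL ℝ v) x - ⟪v, c⟫ with hu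
      have huA : ∀ i, u (A i) = ⟪v, A i - c⟫ := by
        intro i; simp [hu, innerSL_apply_apply, inner_sub_right]
      have hfd : ∀ x, fderiv ℝ u x = innerSL ℝ v := by
        intro x; rw [hu, fderiv_sub_const, ContinuousLinearMap.fderiv]
      have hmem : (∑ i, polyLen A i * ⟪v, polyTau A i⟫ ^ 2) / (∑ i, ⟪v, A i - c⟫ ^ 2)
          ∈ { r : ℝ | ∃ u : EuclideanSpace ℝ (Fin N) → ℝ, ContDiff ℝ (⊤ : ℕ∞) u ∧
            (∑ i, u (A i)) = 0 ∧ (∑ i, u (A i) ^ 2) ≠ 0 ∧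
            r = (∑ i, ∫ x in segment ℝ (A i) (A (i + 1)),
                  ‖(fderiv ℝ u x (polyTau A i)) • polyTau A i‖ ^ 2 ∂(μH[1])) /
                (∑ i, u (A i) ^ 2) } := by
        refine ⟨u, ((innerSL ℝ v).contDiff).sub contDiff_const, ?_, ?_, ?_⟩
        · simp only [huA]
          rw [← inner_sum, hcent, inner_zero_right]
        · simpa only [huA] using hD
        · simp only [huA]
          congr 1
          refine Finset.sum_congr rfl fun i _ => ?_
          have hconst : ∀ x : EuclideanSpace ℝ (Fin N),
              ‖(fderiv ℝ u x (polyTau A i)) • polyTau A i‖ ^ 2 = ⟪v, polyTau A i⟫ ^ 2 := by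
            intro x
            rw [hfd, innerSL_apply_apply, norm_smul, hτ, mul_one, Real.norm_eq_abs, sq_abs]
          simp only [hconst]
          rw [setIntegral_const, measureReal_def, hausdorffMeasure_segment, edist_dist,
            ENNReal.toReal_ofReal dist_nonneg, dist_eq_norm, smul_eq_mul, ← norm_sub_rev]
          rfl
      have hle : polyLambda1 A ≤
          (∑ i, polyLen A i * ⟪v, polyTau A i⟫ ^ 2) / (∑ i, ⟪v, A i - c⟫ ^ 2) :=
        csInf_le ⟨0, hbdd⟩ hmem
      calc polyLambda1 A * (∑ i, ⟪v, A i - c⟫ ^ 2)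
          ≤ ((∑ i, polyLen A i * ⟪v, polyTau A i⟫ ^ 2) / (∑ i, ⟪v, A i - c⟫ ^ 2))
            * (∑ i, ⟪v, A i - c⟫ ^ 2) := by
            exact mul_le_mul_of_nonneg_right hle hDpos.le
        _ = ∑ i, polyLen A i * ⟪v, polyTau A i⟫ ^ 2 := div_mul_cancel₀ _ hD
  -- sum over coordinate directions
  have hnormsq : ∀ w : EuclideanSpace ℝ (Fin N), (∑ k : Fin N, (w k) ^ 2) = ‖w‖ ^ 2 := by
    intro w
    rw [EuclideanSpace.norm_eq, Real.sq_sqrt (Finset.sum_nonneg fun k _ => by positivity)]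
    exact Finset.sum_congr rfl fun k _ => by rw [Real.norm_eq_abs, sq_abs]
  set D : ℝ := ∑ i : ZMod n, ‖A i - c‖ ^ 2 with hDdef
  have hmain : polyLambda1 A * D ≤ L := by
    have h1 : ∀ k : Fin N,
        polyLambda1 A * (∑ i, ((A i - c) k) ^ 2) ≤ ∑ i, polyLen A i * ((polyTau A i) k) ^ 2 := by
      intro k
      have := hkey (EuclideanSpace.single k 1)
      simpa [EuclideanSpace.inner_single_left] using this
    have h2 : polyLambda1 A * (∑ k : Fin N, ∑ i : ZMod n, ((A i - c) k) ^ 2) ≤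
        ∑ k : Fin N, ∑ i : ZMod n, polyLen A i * ((polyTau A i) k) ^ 2 := by
      rw [Finset.mul_sum]
      exact Finset.sum_le_sum fun k _ => h1 k
    calc polyLambda1 A * D = polyLambda1 A * (∑ k : Fin N, ∑ i : ZMod n, ((A i - c) k) ^ 2) := by
          rw [Finset.sum_comm]
          congr 1
          exact Finset.sum_congr rfl fun i _ => (hnormsq _).symm
      _ ≤ ∑ k : Fin N, ∑ i : ZMod n, polyLen A i * ((polyTau A i) k) ^ 2 := h2
      _ = ∑ i : ZMod n, polyLen A i * ‖polyTau A i‖ ^ 2 := by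
          rw [Finset.sum_comm]
          exact Finset.sum_congr rfl fun i _ => by
            rw [← Finset.mul_sum, hnormsq]
      _ = L := by
          exact Finset.sum_congr rfl fun i _ => by rw [hτ, one_pow, mul_one]
  -- H_i = τ_{i-1} - τ_i
  have hHeq : ∀ i, polyH A i = polyTau A (i - 1) - polyTau A i := by
    intro i
    have h1 : ‖A i - A (i - 1)‖⁻¹ • (A i - A (i - 1)) = polyTau A (i - 1) := by
      rw [polyTau, sub_add_cancel]
    have h2 : ‖A i - A (i + 1)‖⁻¹ • (A i - A (i + 1)) = -polyTau A i := by
      rw [polyTau, norm_sub_rev (A (i + 1)), ← neg_sub (A (i + 1)) (A i), smul_neg]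
    rw [polyH, h1, h2]
    abel
  -- first variation: L = ∑ ⟪A i - c, H i⟫
  have hfv : L = ∑ i : ZMod n, ⟪A i - c, polyH A i⟫ := by
    have hshift : (∑ i : ZMod n, ⟪A i - c, polyTau A (i - 1)⟫) =
        ∑ i : ZMod n, ⟪A (i + 1) - c, polyTau A i⟫ := by
      refine (Fintype.sum_equiv (Equiv.addRight (1 : ZMod n))
        (fun i => ⟪A (i + 1) - c, polyTau A i⟫) (fun i => ⟪A i - c, polyTau A (i - 1)⟫) ?_).symm
      intro x
      simp [add_sub_cancel_right]
    simp only [hHeq, inner_sub_right, Finset.sum_sub_distrib, hshift]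
    rw [← Finset.sum_sub_distrib]
    refine (Finset.sum_congr rfl fun i _ => ?_)
    rw [← inner_sub_left, sub_sub_sub_cancel_right, polyTau, real_inner_smul_right,
      real_inner_self_eq_norm_sq, polyLen]
    have h0 : ‖A (i+1) - A i‖ ≠ 0 := norm_ne_zero_iff.mpr (hsub i)
    field_simp
  -- Cauchy-Schwarz: L^2 ≤ D * S
  have hCS : L ^ 2 ≤ D * S := by
    have h1 : L ≤ ∑ i : ZMod n, ‖A i - c‖ * ‖polyH A i‖ := by
      rw [hfv]
      exact Finset.sum_le_sum fun i _ => real_inner_le_norm _ _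
    have hL0 : 0 ≤ L := Finset.sum_nonneg fun i _ => norm_nonneg _
    calc L ^ 2 ≤ (∑ i : ZMod n, ‖A i - c‖ * ‖polyH A i‖) ^ 2 := by
          exact pow_le_pow_left₀ hL0 h1 2
      _ ≤ D * S := Finset.sum_mul_sq_le_sq_mul_sq _ _ _
  -- D > 0
  have hDpos : 0 < D := by
    rcases eq_or_lt_of_le (Finset.sum_nonneg fun i (_ : i ∈ Finset.univ) =>
      sq_nonneg ‖A i - c‖ : (0:ℝ) ≤ D) with h | h
    · exfalso
      have h' := (Finset.sum_eq_zero_iff_of_nonneg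
        (fun i (_ : i ∈ Finset.univ) => sq_nonneg ‖A i - c‖)).mp h.symm
      have hA0 : A (0:ZMod n) = c := by
        have := h' 0 (Finset.mem_univ _)
        have : ‖A (0:ZMod n) - c‖ = 0 := by nlinarith [norm_nonneg (A (0:ZMod n) - c)]
        rw [norm_eq_zero, sub_eq_zero] at this; exact this
      have hA1 : A ((0:ZMod n) + 1) = c := by
        have := h' ((0:ZMod n) + 1) (Finset.mem_univ _)
        have : ‖A ((0:ZMod n) + 1) - c‖ = 0 := by
          nlinarith [norm_nonneg (A ((0:ZMod n)+1) - c)]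
        rw [norm_eq_zero, sub_eq_zero] at this; exact this
      exact hne 0 (hA1.trans hA0.symm)
    · exact h
  have hL0 : 0 ≤ L := Finset.sum_nonneg fun i _ => norm_nonneg _
  nlinarith [hmain, hCS, hDpos, hL0, mul_le_mul_of_nonneg_left hmain hL0]
end
end

section
/- Let A = {A_i}_{1 ≤ i ≤ n+1} be a polygon in ℝ^N with total length ℋ¹(K_A) = ∑_{i=1}^n ℓ_i, and let u : ℝ^N → ℝ be a smooth function. Then for every x ∈ K_A, |u(x)| ≤ ℋ¹(K_A)^{−1/2} · (∫_{K_A} u² dℋ¹)^{1/2} + ℋ¹(K_A)^{1/2} · (∑_{i=1}^n ∫_{[A_i,A_{i+1}]} ⟪∇u, τ_i⟫² dℋ¹)^{1/2}. -/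
open MeasureTheory
open scoped RealInnerProductSpace ENNReal NNReal

noncomputable section

open Set

namespace PolyAux
variable {N : ℕ}


variable (a b : EuclideanSpace ℝ (Fin N))

/-- arc-length parametrization of the segment [a,b] -/
def par (t : ℝ) : EuclideanSpace ℝ (Fin N) := a + t • (‖b - a‖⁻¹ • (b - a))

variable {a b}

lemma norm_pos (hab : b ≠ a) : (0:ℝ) < ‖b - a‖ := by
  rw [norm_pos_iff, sub_ne_zero]; exact hab

lemma isometry_par (hab : b ≠ a) : Isometry (par a b) := by
  have h := norm_pos hab
  apply Isometry.of_dist_eq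
  intro s t
  simp only [par, dist_eq_norm, add_sub_add_left_eq_sub, ← sub_smul, norm_smul, norm_smul,
    Real.norm_eq_abs, norm_inv, norm_norm]
  field_simp
  rw [abs_norm]

lemma image_Icc (hab : b ≠ a) : par a b '' Icc 0 ‖b - a‖ = segment ℝ a b := by
  have h := norm_pos hab
  rw [segment_eq_image']
  ext y
  constructor
  · rintro ⟨t, ⟨ht0, ht1⟩, rfl⟩
    refine ⟨‖b - a‖⁻¹ * t, ⟨by positivity, ?_⟩, ?_⟩
    · rw [inv_mul_le_one₀ h]; exact ht1
    · rw [par, smul_smul, mul_comm]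
  · rintro ⟨θ, ⟨hθ0, hθ1⟩, rfl⟩
    refine ⟨θ * ‖b - a‖, ⟨by positivity, by nlinarith⟩, ?_⟩
    simp only [par, smul_smul]
    rw [mul_assoc, mul_inv_cancel₀ h.ne', mul_one]

lemma image_Ioo (hab : b ≠ a) : par a b '' Ioo 0 ‖b - a‖ = openSegment ℝ a b := by
  have h := norm_pos hab
  rw [openSegment_eq_image']
  ext y
  constructor
  · rintro ⟨t, ⟨ht0, ht1⟩, rfl⟩
    refine ⟨‖b - a‖⁻¹ * t, ⟨by positivity, ?_⟩, ?_⟩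
    · rw [inv_mul_lt_one₀ h]; exact ht1
    · rw [par, smul_smul, mul_comm]
  · rintro ⟨θ, ⟨hθ0, hθ1⟩, rfl⟩
    refine ⟨θ * ‖b - a‖, ⟨by positivity, by nlinarith⟩, ?_⟩
    simp only [par, smul_smul]
    rw [mul_assoc, mul_inv_cancel₀ h.ne', mul_one]

lemma measurableEmbedding_par (hab : b ≠ a) : MeasurableEmbedding (par a b) :=
  ((isometry_par hab).isClosedEmbedding).measurableEmbedding

lemma map_measure (hab : b ≠ a) {s : Set ℝ} (hs : MeasurableSet s) :
    (μH[1] : Measure (EuclideanSpace ℝ (Fin N))).restrict (par a b '' s)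
      = Measure.map (par a b) (volume.restrict s) := by
  have hiso := isometry_par (N := N) hab
  have hme := measurableEmbedding_par (N := N) hab
  ext B hB
  rw [Measure.restrict_apply hB, Measure.map_apply hme.measurable hB,
    Measure.restrict_apply (hme.measurable hB)]
  rw [Set.inter_comm B, ← Set.image_inter_preimage,
    hiso.hausdorffMeasure_image (Or.inl zero_le_one),
    ← MeasureTheory.hausdorffMeasure_real, Set.inter_comm]

lemma integral_image (hab : b ≠ a) {s : Set ℝ} (hs : MeasurableSet s)
    (f : EuclideanSpace ℝ (Fin N) → ℝ) :
    ∫ y in par a b '' s, f y ∂μH[1] = ∫ t in s, f (par a b t) := by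
  rw [map_measure hab hs, (measurableEmbedding_par hab).integral_map]

lemma integral_segment (hab : b ≠ a) (f : EuclideanSpace ℝ (Fin N) → ℝ) :
    ∫ y in segment ℝ a b, f y ∂μH[1] = ∫ t in Icc 0 ‖b - a‖, f (par a b t) := by
  rw [← image_Icc hab, integral_image hab measurableSet_Icc]

lemma integral_openSegment (hab : b ≠ a) (f : EuclideanSpace ℝ (Fin N) → ℝ) :
    ∫ y in openSegment ℝ a b, f y ∂μH[1] = ∫ t in Ioo 0 ‖b - a‖, f (par a b t) := by
  rw [← image_Ioo hab, integral_image hab measurableSet_Ioo]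

lemma integral_segment_eq_open (hab : b ≠ a) (f : EuclideanSpace ℝ (Fin N) → ℝ) :
    ∫ y in segment ℝ a b, f y ∂μH[1] = ∫ y in openSegment ℝ a b, f y ∂μH[1] := by
  rw [integral_segment hab, integral_openSegment hab, integral_Icc_eq_integral_Ioo]

lemma measure_segment (hab : b ≠ a) :
    (μH[1] : Measure (EuclideanSpace ℝ (Fin N))) (segment ℝ a b) = ENNReal.ofReal ‖b - a‖ := by
  have := map_measure (N := N) hab (s := Icc 0 ‖b - a‖) measurableSet_Icc
  have h2 : (μH[1] : Measure (EuclideanSpace ℝ (Fin N))) (segment ℝ a b)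
      = (μH[1] : Measure (EuclideanSpace ℝ (Fin N))).restrict (segment ℝ a b) (segment ℝ a b) := by
    rw [Measure.restrict_apply_self]
  rw [h2, ← image_Icc hab, this, Measure.map_apply (measurableEmbedding_par hab).measurable
    (by exact (measurableEmbedding_par hab).measurableSet_image' measurableSet_Icc),
    Measure.restrict_apply ((measurableEmbedding_par hab).measurable
      ((measurableEmbedding_par hab).measurableSet_image' measurableSet_Icc))]
  have : par a b ⁻¹' (par a b '' Icc 0 ‖b - a‖) = Icc 0 ‖b - a‖ :=
    (measurableEmbedding_par hab).injective.preimage_image _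
  rw [this, Set.inter_self, Real.volume_Icc, sub_zero]


variable {a b : EuclideanSpace ℝ (Fin N)} {u : EuclideanSpace ℝ (Fin N) → ℝ}

lemma cont_deriv (hu : ContDiff ℝ (⊤ : ℕ∞) u) (v : EuclideanSpace ℝ (Fin N)) :
    Continuous fun y => fderiv ℝ u y v :=
  (ContinuousLinearMap.apply ℝ ℝ v).continuous.comp (hu.continuous_fderiv (by simp))

lemma hasDerivAt_comp (hu : ContDiff ℝ (⊤ : ℕ∞) u) (hab : b ≠ a) (t : ℝ) :
    HasDerivAt (fun t => u (par a b t)) (fderiv ℝ u (par a b t) (‖b - a‖⁻¹ • (b - a))) t := by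
  have hφ : HasDerivAt (par a b) (‖b - a‖⁻¹ • (b - a)) t := by
    unfold par
    simpa using ((hasDerivAt_id t).smul_const (‖b - a‖⁻¹ • (b - a))).const_add a
  exact ((hu.differentiable (by simp) (par a b t)).hasFDerivAt).comp_hasDerivAt t hφ

lemma diff_bound (hu : ContDiff ℝ (⊤ : ℕ∞) u) (hab : b ≠ a) {p q : EuclideanSpace ℝ (Fin N)}
    (hp : p ∈ segment ℝ a b) (hq : q ∈ segment ℝ a b) :
    |u p - u q| ≤ ∫ y in segment ℝ a b, |fderiv ℝ u y (‖b - a‖⁻¹ • (b - a))| ∂μH[1] := by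
  rw [← image_Icc hab] at hp hq
  obtain ⟨s, hs, rfl⟩ := hp
  obtain ⟨t, ht, rfl⟩ := hq
  have hcont : Continuous fun r : ℝ => fderiv ℝ u (par a b r) (‖b - a‖⁻¹ • (b - a)) :=
    (cont_deriv hu _).comp (isometry_par hab).continuous
  have hftc : u (par a b s) - u (par a b t)
      = ∫ r in t..s, fderiv ℝ u (par a b r) (‖b - a‖⁻¹ • (b - a)) := by
    rw [intervalIntegral.integral_eq_sub_of_hasDerivAt
      (fun r _ => hasDerivAt_comp hu hab r) (hcont.intervalIntegrable t s)]
  rw [hftc]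
  have h1 : |∫ r in t..s, fderiv ℝ u (par a b r) (‖b - a‖⁻¹ • (b - a))|
      ≤ ∫ r in Set.uIoc t s, |fderiv ℝ u (par a b r) (‖b - a‖⁻¹ • (b - a))| := by
    simpa only [Real.norm_eq_abs] using intervalIntegral.norm_integral_le_integral_norm_uIoc
      (f := fun r => fderiv ℝ u (par a b r) (‖b - a‖⁻¹ • (b - a))) (a := t) (b := s) (μ := volume)
  refine h1.trans ?_
  rw [integral_segment hab]
  apply setIntegral_mono_set
  · exact hcont.abs.integrableOn_Icc
  · exact Filter.Eventually.of_forall fun r => abs_nonneg _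
  · refine HasSubset.Subset.eventuallyLE (Set.uIoc_subset_uIcc.trans ?_)
    exact Set.uIcc_subset_Icc ht hs

lemma cs_interval {h : ℝ → ℝ} (hh : Continuous h) {ℓ : ℝ} (hℓ : 0 ≤ ℓ) :
    ∫ t in Icc 0 ℓ, |h t| ≤ Real.sqrt ℓ * Real.sqrt (∫ t in Icc 0 ℓ, h t ^ 2) := by
  set μ : Measure ℝ := volume.restrict (Icc 0 ℓ) with hμ
  haveI : IsFiniteMeasure μ := ⟨by
    rw [hμ, Measure.restrict_apply_univ, Real.volume_Icc]
    exact ENNReal.ofReal_lt_top⟩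
  obtain ⟨C, hC⟩ := isCompact_Icc.exists_bound_of_continuousOn
    (f := fun t => |h t|) hh.abs.continuousOn
  have hmem : MemLp (fun t => |h t|) (ENNReal.ofReal 2) μ := by
    refine MemLp.of_bound hh.abs.aestronglyMeasurable C ?_
    rw [hμ]
    exact (ae_restrict_iff' measurableSet_Icc).mpr (Filter.Eventually.of_forall hC)
  have hone : MemLp (fun _ : ℝ => (1:ℝ)) (ENNReal.ofReal 2) μ := memLp_const 1
  have := integral_mul_le_Lp_mul_Lq_of_nonneg (μ := μ)
    (Real.holderConjugate_iff.mpr ⟨one_lt_two, by norm_num⟩)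
    (Filter.Eventually.of_forall fun t => abs_nonneg (h t))
    (Filter.Eventually.of_forall fun _ => zero_le_one) hmem hone
  simp only [mul_one, Real.rpow_two, sq_abs, one_pow] at this
  refine this.trans ?_
  have e2 : (∫ _, (1:ℝ) ∂μ) = ℓ := by
    simp [hμ, Real.volume_Icc, ENNReal.toReal_ofReal hℓ, hℓ]
  rw [e2, ← Real.sqrt_eq_rpow, ← Real.sqrt_eq_rpow, mul_comm]

lemma cs_bound (hu : ContDiff ℝ (⊤ : ℕ∞) u) (hab : b ≠ a) :
    ∫ y in segment ℝ a b, |fderiv ℝ u y (‖b - a‖⁻¹ • (b - a))| ∂μH[1]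
      ≤ Real.sqrt ‖b - a‖ *
        Real.sqrt (∫ y in segment ℝ a b, (fderiv ℝ u y (‖b - a‖⁻¹ • (b - a))) ^ 2 ∂μH[1]) := by
  rw [integral_segment hab, integral_segment hab]
  exact cs_interval ((cont_deriv hu _).comp (isometry_par hab).continuous) (norm_nonneg _)

lemma measurableSet_openSegment (hab : b ≠ a) :
    MeasurableSet (openSegment ℝ a b) := by
  rw [← image_Ioo hab]
  exact (measurableEmbedding_par hab).measurableSet_image' measurableSet_Ioo

lemma isCompact_seg (hab : b ≠ a) : IsCompact (segment ℝ a b) := by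
  rw [← image_Icc hab]
  exact isCompact_Icc.image (isometry_par hab).continuous

lemma const_le_integral (hab : b ≠ a) {c : ℝ} {f : EuclideanSpace ℝ (Fin N) → ℝ}
    (hf : Continuous f) (hc : ∀ y ∈ segment ℝ a b, c ≤ f y) :
    c * ‖b - a‖ ≤ ∫ y in segment ℝ a b, f y ∂μH[1] := by
  rw [integral_segment hab]
  have h1 : ∫ _ in Icc (0:ℝ) ‖b - a‖, c = c * ‖b - a‖ := by
    simp [Real.volume_Icc, ENNReal.toReal_ofReal (norm_nonneg (b - a)), mul_comm]
  rw [← h1]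
  refine setIntegral_mono_on ?_ ?_ measurableSet_Icc ?_
  · exact integrableOn_const (by rw [Real.volume_Icc]; exact ENNReal.ofReal_ne_top)
  · exact (hf.comp (isometry_par hab).continuous).integrableOn_Icc
  · intro t ht
    refine hc _ ?_
    rw [← image_Icc hab]
    exact mem_image_of_mem _ ht

end PolyAux

/-- **Sup bound on a polygon**: for a polygon `A` with total length `ℋ¹(K_A) = ∑ᵢ ℓᵢ` and a
smooth `u : ℝᴺ → ℝ`, every `x ∈ K_A` satisfies
`|u(x)| ≤ ℋ¹(K_A)^{-1/2} (∫_{K_A} u² dℋ¹)^{1/2} + ℋ¹(K_A)^{1/2} (∑ᵢ ∫_{[Aᵢ,Aᵢ₊₁]} ⟪∇u, τᵢ⟫² dℋ¹)^{1/2}`. -/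
theorem polygon_sup_bound {N n : ℕ} [NeZero n]
    (A : ZMod n → EuclideanSpace ℝ (Fin N)) (hA : IsPolygon A)
    (u : EuclideanSpace ℝ (Fin N) → ℝ) (hu : ContDiff ℝ (⊤ : ℕ∞) u)
    (x : EuclideanSpace ℝ (Fin N)) (hx : x ∈ ⋃ i : ZMod n, segment ℝ (A i) (A (i + 1))) :
    |u x| ≤
      (Real.sqrt (∑ i : ZMod n, polyLen A i))⁻¹ *
        Real.sqrt (∫ y in ⋃ i : ZMod n, segment ℝ (A i) (A (i + 1)), u y ^ 2 ∂(μH[1])) +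
      Real.sqrt (∑ i : ZMod n, polyLen A i) *
        Real.sqrt (∑ i : ZMod n, ∫ y in segment ℝ (A i) (A (i + 1)),
          (fderiv ℝ u y (polyTau A i)) ^ 2 ∂(μH[1])) := by
  classical
  obtain ⟨h3, hne, hdisj, -⟩ := hA
  simp only [polyLen, polyTau]
  set K : Set (EuclideanSpace ℝ (Fin N)) := ⋃ i : ZMod n, segment ℝ (A i) (A (i + 1)) with hK
  set L : ℝ := ∑ i : ZMod n, ‖A (i + 1) - A i‖ with hL
  have hℓpos : ∀ i : ZMod n, (0:ℝ) < ‖A (i + 1) - A i‖ := fun i => PolyAux.norm_pos (hne i)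
  have hLpos : 0 < L :=
    Finset.sum_pos (fun i _ => hℓpos i) ⟨0, Finset.mem_univ 0⟩
  have hKcpt : IsCompact K := isCompact_iUnion fun i => PolyAux.isCompact_seg (hne i)
  have hKmeas : MeasurableSet K := hKcpt.measurableSet
  have hKfin : (μH[1] : Measure (EuclideanSpace ℝ (Fin N))) K < ⊤ := by
    calc (μH[1] : Measure (EuclideanSpace ℝ (Fin N))) K
        ≤ ∑' i : ZMod n, μH[1] (segment ℝ (A i) (A (i + 1))) := measure_iUnion_le _
      _ = ∑ i : ZMod n, ENNReal.ofReal ‖A (i + 1) - A i‖ := by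
          rw [tsum_fintype]
          exact Finset.sum_congr rfl fun i _ => PolyAux.measure_segment (hne i)
      _ < ⊤ := by
          refine ENNReal.sum_lt_top.mpr fun i _ => ENNReal.ofReal_lt_top
  have hcontu2 : Continuous fun z => u z ^ 2 := (hu.continuous).pow 2
  haveI : IsFiniteMeasure ((μH[1] : Measure (EuclideanSpace ℝ (Fin N))).restrict K) :=
    ⟨by rwa [Measure.restrict_apply_univ]⟩
  obtain ⟨C, hC⟩ := hKcpt.exists_bound_of_continuousOn hcontu2.continuousOn
  have hint : IntegrableOn (fun z => u z ^ 2) K μH[1] := by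
    refine Integrable.mono' (integrable_const C) hcontu2.aestronglyMeasurable.restrict ?_
    exact (ae_restrict_iff' hKmeas).mpr (Filter.Eventually.of_forall hC)
  obtain ⟨y, hyK, hymin⟩ := hKcpt.exists_isMinOn ⟨x, hx⟩ hcontu2.continuousOn
  -- Step A
  have hstepA : u y ^ 2 * L ≤ ∫ z in K, u z ^ 2 ∂μH[1] := by
    have h1 : ∀ i : ZMod n, u y ^ 2 * ‖A (i + 1) - A i‖
        ≤ ∫ z in segment ℝ (A i) (A (i + 1)), u z ^ 2 ∂μH[1] := by
      intro i
      refine PolyAux.const_le_integral (hne i) hcontu2 fun z hz => ?_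
      exact isMinOn_iff.mp hymin z (mem_iUnion.mpr ⟨i, hz⟩)
    have hsub : (⋃ i : ZMod n, openSegment ℝ (A i) (A (i + 1))) ⊆ K :=
      iUnion_mono fun i => openSegment_subset_segment ℝ _ _
    have h3 : ∑ i : ZMod n, ∫ z in openSegment ℝ (A i) (A (i + 1)), u z ^ 2 ∂μH[1]
        = ∫ z in ⋃ i : ZMod n, openSegment ℝ (A i) (A (i + 1)), u z ^ 2 ∂μH[1] := by
      rw [integral_iUnion (fun i => PolyAux.measurableSet_openSegment (hne i))
        (fun i j hij => Set.disjoint_iff_inter_eq_empty.mpr (hdisj i j hij))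
        (hint.mono_set hsub), tsum_fintype]
    have h4 : ∫ z in ⋃ i : ZMod n, openSegment ℝ (A i) (A (i + 1)), u z ^ 2 ∂μH[1]
        ≤ ∫ z in K, u z ^ 2 ∂μH[1] := by
      refine setIntegral_mono_set hint
        (Filter.Eventually.of_forall fun z => sq_nonneg _)
        (HasSubset.Subset.eventuallyLE hsub)
    calc u y ^ 2 * L = ∑ i : ZMod n, u y ^ 2 * ‖A (i + 1) - A i‖ := by
          rw [hL, Finset.mul_sum]
      _ ≤ ∑ i : ZMod n, ∫ z in segment ℝ (A i) (A (i + 1)), u z ^ 2 ∂μH[1] :=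
          Finset.sum_le_sum fun i _ => h1 i
      _ = ∑ i : ZMod n, ∫ z in openSegment ℝ (A i) (A (i + 1)), u z ^ 2 ∂μH[1] :=
          Finset.sum_congr rfl fun i _ => PolyAux.integral_segment_eq_open (hne i) _
      _ = _ := h3
      _ ≤ _ := h4
  have hIK : 0 ≤ ∫ z in K, u z ^ 2 ∂μH[1] := setIntegral_nonneg hKmeas fun z _ => sq_nonneg _
  have hya : |u y| ≤ (Real.sqrt L)⁻¹ * Real.sqrt (∫ z in K, u z ^ 2 ∂μH[1]) := by
    have h5 : u y ^ 2 ≤ (∫ z in K, u z ^ 2 ∂μH[1]) / L := (le_div_iff₀ hLpos).mpr hstepA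
    have := Real.sqrt_le_sqrt h5
    rw [Real.sqrt_sq_eq_abs] at this
    refine this.trans ?_
    rw [Real.sqrt_div hIK L, div_eq_inv_mul]
  -- Step B
  set Ei : ZMod n → ℝ := fun i =>
    ∫ z in segment ℝ (A i) (A (i + 1)),
      |fderiv ℝ u z (‖A (i + 1) - A i‖⁻¹ • (A (i + 1) - A i))| ∂μH[1] with hEi
  have hEnonneg : ∀ i, 0 ≤ Ei i := fun i =>
    setIntegral_nonneg (PolyAux.isCompact_seg (hne i)).measurableSet fun z _ => abs_nonneg _
  have hedge : ∀ (i : ZMod n) {p q : EuclideanSpace ℝ (Fin N)},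
      p ∈ segment ℝ (A i) (A (i + 1)) → q ∈ segment ℝ (A i) (A (i + 1)) →
      |u p - u q| ≤ Ei i := fun i p q hp hq => PolyAux.diff_bound hu (hne i) hp hq
  obtain ⟨i0, hxseg⟩ := mem_iUnion.mp hx
  obtain ⟨j0, hyseg⟩ := mem_iUnion.mp hyK
  have key : ∀ m : ℕ, 1 ≤ m → |u (A (i0 + 1)) - u (A (i0 + (m : ZMod n)))|
      ≤ ∑ k ∈ Finset.Ico 1 m, Ei (i0 + (k : ZMod n)) := by
    intro m hm
    induction m, hm using Nat.le_induction with
    | base => simp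
    | succ m hm ih =>
      have hc1 : ((m + 1 : ℕ) : ZMod n) = (m : ZMod n) + 1 := by push_cast; ring
      rw [hc1, Finset.sum_Ico_succ_top hm, ← add_assoc]
      have htri := abs_sub_le (u (A (i0 + 1))) (u (A (i0 + (m : ZMod n))))
        (u (A (i0 + (m : ZMod n) + 1)))
      have hlast : |u (A (i0 + (m : ZMod n))) - u (A (i0 + (m : ZMod n) + 1))|
          ≤ Ei (i0 + (m : ZMod n)) :=
        hedge _ (left_mem_segment ℝ _ _) (right_mem_segment ℝ _ _)
      linarith
  have hstepB : |u x - u y| ≤ ∑ i : ZMod n, Ei i := by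
    by_cases hij : i0 = j0
    · subst hij
      have := hedge i0 hxseg hyseg
      refine this.trans (Finset.single_le_sum (fun i _ => hEnonneg i) (Finset.mem_univ i0))
    · set m : ℕ := (j0 - i0).val with hm
      have hmn : m < n := ZMod.val_lt _
      have hm1 : 1 ≤ m := by
        rw [Nat.one_le_iff_ne_zero]
        intro h0
        have : j0 - i0 = 0 := (ZMod.val_eq_zero _).mp h0
        rw [sub_eq_zero] at this
        exact hij this.symm
      have hAj0 : i0 + (m : ZMod n) = j0 := by
        rw [hm, ZMod.natCast_rightInverse (j0 - i0)]; ring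
      have h1 : |u x - u (A (i0 + 1))| ≤ Ei i0 := hedge i0 hxseg (right_mem_segment ℝ _ _)
      have h2 := key m hm1
      rw [hAj0] at h2
      have h3 : |u (A j0) - u y| ≤ Ei j0 := hedge j0 (left_mem_segment ℝ _ _) hyseg
      have htri1 := abs_sub_le (u x) (u (A (i0 + 1))) (u y)
      have htri2 := abs_sub_le (u (A (i0 + 1))) (u (A j0)) (u y)
      have hmain : |u x - u y|
          ≤ ∑ k ∈ Finset.range (m + 1), Ei (i0 + (k : ZMod n)) := by
        rw [Finset.range_eq_Ico, Finset.sum_eq_sum_Ico_succ_bot (Nat.succ_pos m),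
          Finset.sum_Ico_succ_top hm1]
        have e0 : i0 + ((0 : ℕ) : ZMod n) = i0 := by push_cast; ring
        rw [e0, hAj0]
        linarith
      refine hmain.trans ?_
      have hinj : ∀ k1 ∈ Finset.range (m + 1), ∀ k2 ∈ Finset.range (m + 1),
          i0 + (k1 : ZMod n) = i0 + (k2 : ZMod n) → k1 = k2 := by
        intro k1 hk1 k2 hk2 h
        have hcast : (k1 : ZMod n) = (k2 : ZMod n) := by
          exact add_left_cancel h
        have hk1n : k1 < n := lt_of_lt_of_le (Finset.mem_range.mp hk1) hmn
        have hk2n : k2 < n := lt_of_lt_of_le (Finset.mem_range.mp hk2) hmn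
        calc k1 = ((k1 : ZMod n)).val := (ZMod.val_cast_of_lt hk1n).symm
          _ = ((k2 : ZMod n)).val := by rw [hcast]
          _ = k2 := ZMod.val_cast_of_lt hk2n
      calc ∑ k ∈ Finset.range (m + 1), Ei (i0 + (k : ZMod n))
          = ∑ j ∈ (Finset.range (m + 1)).image (fun k : ℕ => i0 + (k : ZMod n)), Ei j :=
            (Finset.sum_image hinj).symm
        _ ≤ ∑ i : ZMod n, Ei i :=
            Finset.sum_le_sum_of_subset_of_nonneg (Finset.subset_univ _)
              (fun i _ _ => hEnonneg i)
  -- Step C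
  have hstepC : ∑ i : ZMod n, Ei i ≤ Real.sqrt L *
      Real.sqrt (∑ i : ZMod n, ∫ z in segment ℝ (A i) (A (i + 1)),
        (fderiv ℝ u z (‖A (i + 1) - A i‖⁻¹ • (A (i + 1) - A i))) ^ 2 ∂μH[1]) := by
    set Ii : ZMod n → ℝ := fun i => ∫ z in segment ℝ (A i) (A (i + 1)),
      (fderiv ℝ u z (‖A (i + 1) - A i‖⁻¹ • (A (i + 1) - A i))) ^ 2 ∂μH[1] with hIi
    have hIin : ∀ i, 0 ≤ Ii i := fun i =>
      setIntegral_nonneg (PolyAux.isCompact_seg (hne i)).measurableSet fun z _ => sq_nonneg _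
    have h1 : ∀ i, Ei i ≤ Real.sqrt ‖A (i + 1) - A i‖ * Real.sqrt (Ii i) := fun i =>
      PolyAux.cs_bound hu (hne i)
    have hcs := Finset.sum_mul_sq_le_sq_mul_sq Finset.univ
      (fun i : ZMod n => Real.sqrt ‖A (i + 1) - A i‖) (fun i => Real.sqrt (Ii i))
    have hsq1 : ∀ i : ZMod n, Real.sqrt ‖A (i + 1) - A i‖ ^ 2 = ‖A (i + 1) - A i‖ :=
      fun i => Real.sq_sqrt (norm_nonneg _)
    have hsq2 : ∀ i, Real.sqrt (Ii i) ^ 2 = Ii i := fun i => Real.sq_sqrt (hIin i)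
    simp only [hsq1, hsq2] at hcs
    have h2 : ∑ i : ZMod n, Real.sqrt ‖A (i + 1) - A i‖ * Real.sqrt (Ii i)
        ≤ Real.sqrt (L * ∑ i, Ii i) := by
      rw [← hL] at hcs
      refine (Real.le_sqrt (Finset.sum_nonneg fun i _ =>
        mul_nonneg (Real.sqrt_nonneg _) (Real.sqrt_nonneg _))
        (mul_nonneg hLpos.le (Finset.sum_nonneg fun i _ => hIin i))).mpr hcs
    calc ∑ i : ZMod n, Ei i ≤ ∑ i : ZMod n, Real.sqrt ‖A (i + 1) - A i‖ * Real.sqrt (Ii i) :=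
          Finset.sum_le_sum fun i _ => h1 i
      _ ≤ Real.sqrt (L * ∑ i, Ii i) := h2
      _ = Real.sqrt L * Real.sqrt (∑ i, Ii i) := Real.sqrt_mul hLpos.le _
  have hfinal := abs_sub_abs_le_abs_sub (u x) (u y)
  linarith
end
end

section
/- Let A = {A_i}_{1 ≤ i ≤ n+1} be a polygon in ℝ^N such that for every 1 ≤ i ≤ n there exists a constant c_i ∈ ℝ \ {0} with c_i A_i = H_i. Then the polygon is planar: the linear span of {A_1, …, A_n} has dimension at most 2. -/
open MeasureTheory
open scoped RealInnerProductSpace ENNReal NNReal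

noncomputable section

/-- **Planarity in the equality case**: if every vertex of a polygon satisfies `cᵢ Aᵢ = Hᵢ`
for some nonzero constant `cᵢ`, then the polygon is planar: the span of the vertices has
dimension at most `2`. -/
theorem polygon_planar_of_vertices_colinear_curvature {N n : ℕ} [NeZero n]
    (A : ZMod n → EuclideanSpace ℝ (Fin N)) (hA : IsPolygon A)
    (hc : ∀ i, ∃ c : ℝ, c ≠ 0 ∧ c • A i = polyH A i) :
    Module.finrank ℝ ↥(Submodule.span ℝ (Set.range A)) ≤ 2 := by
  classical
  set W : Submodule ℝ (EuclideanSpace ℝ (Fin N)) :=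
    Submodule.span ℝ {A 0, polyTau A 0} with hW
  have hne : ∀ i : ZMod n, A (i + 1) - A i ≠ 0 := fun i =>
    sub_ne_zero.mpr (hA.2.1 i)
  have hstep : ∀ i : ZMod n, A (i + 1) = A i + ‖A (i + 1) - A i‖ • polyTau A i := by
    intro i
    rw [polyTau, smul_inv_smul₀ (norm_ne_zero_iff.mpr (hne i))]
    abel
  have hH : ∀ i : ZMod n, polyH A i = polyTau A (i - 1) - polyTau A i := by
    intro i
    simp only [polyH, polyTau, sub_add_cancel, norm_sub_rev (A i) (A (i + 1))]
    module
  have key : ∀ k : ℕ, A (k : ZMod n) ∈ W ∧ polyTau A (k : ZMod n) ∈ W := by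
    intro k
    induction k with
    | zero =>
      constructor
      · exact Submodule.subset_span (by simp)
      · exact Submodule.subset_span (by simp)
    | succ k ih =>
      have hcast : ((k + 1 : ℕ) : ZMod n) = (k : ZMod n) + 1 := by push_cast; ring
      have hAk1 : A ((k : ZMod n) + 1) ∈ W := by
        rw [hstep (k : ZMod n)]
        exact W.add_mem ih.1 (W.smul_mem _ ih.2)
      refine ⟨by rwa [hcast], ?_⟩
      obtain ⟨c, hc0, hceq⟩ := hc ((k : ZMod n) + 1)
      have := hH ((k : ZMod n) + 1)
      rw [add_sub_cancel_right] at this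
      have hτ : polyTau A ((k : ZMod n) + 1)
          = polyTau A (k : ZMod n) - c • A ((k : ZMod n) + 1) := by
        rw [hceq, this]; abel
      rw [hcast, hτ]
      exact W.sub_mem ih.2 (W.smul_mem _ hAk1)
  have hrange : Set.range A ⊆ (W : Set (EuclideanSpace ℝ (Fin N))) := by
    rintro _ ⟨i, rfl⟩
    obtain ⟨k, rfl⟩ := ZMod.natCast_rightInverse.surjective i
    exact (key k).1
  have hspan : Submodule.span ℝ (Set.range A) ≤ W :=
    Submodule.span_le.mpr hrange
  calc Module.finrank ℝ ↥(Submodule.span ℝ (Set.range A))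
      ≤ Module.finrank ℝ ↥W := Submodule.finrank_mono hspan
    _ ≤ 2 := by
        rw [hW]
        refine le_trans (finrank_span_le_card _) ?_
        rw [Set.toFinset_insert, Set.toFinset_singleton]
        exact (Finset.card_insert_le (A 0) {polyTau A 0}).trans (by norm_num)
end
end

section
/- Let A = {A_i}_{1 ≤ i ≤ n+1} be a polygon in ℝ^N with ∑_{i=1}^n A_i = 0, which realizes equality in the Reilly inequality for polygons, i.e. (∑_{i=1}^n ℓ_i) · λ_1^A = ∑_{i=1}^n |H_i|². Then for every 1 ≤ i ≤ n, H_i = λ_1^A · A_i; in particular λ_1^A ≠ 0 and each vertex satisfies |A_i| = |H_i|/λ_1^A. -/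
open MeasureTheory
open scoped RealInnerProductSpace ENNReal NNReal

noncomputable section

namespace PolyAux

variable {N n : ℕ} [NeZero n] (A : ZMod n → EuclideanSpace ℝ (Fin N))

lemma euclid_norm_sq (x : EuclideanSpace ℝ (Fin N)) : ‖x‖ ^ 2 = ∑ k, (x k) ^ 2 := by
  rw [EuclideanSpace.norm_eq, Real.sq_sqrt (by positivity)]
  simp [sq_abs]

lemma rayleigh_nonneg :
    ∀ r ∈ { r : ℝ | ∃ u : EuclideanSpace ℝ (Fin N) → ℝ, ContDiff ℝ (⊤ : ℕ∞) u ∧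
    (∑ i, u (A i)) = 0 ∧ (∑ i, u (A i) ^ 2) ≠ 0 ∧
    r = (∑ i, ∫ x in segment ℝ (A i) (A (i + 1)),
          ‖(fderiv ℝ u x (polyTau A i)) • polyTau A i‖ ^ 2 ∂(μH[1])) /
        (∑ i, u (A i) ^ 2) }, 0 ≤ r := by
  rintro r ⟨u, -, -, -, rfl⟩
  apply div_nonneg
  · exact Finset.sum_nonneg fun i _ => integral_nonneg fun x => by positivity
  · exact Finset.sum_nonneg fun i _ => sq_nonneg _

lemma lambda1_nonneg : 0 ≤ polyLambda1 A :=
  Real.sInf_nonneg (rayleigh_nonneg A)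

lemma coord_bound (hne : ∀ i, A (i + 1) ≠ A i)
    (hcenter : (∑ i : ZMod n, A i) = 0) (k : Fin N) :
    polyLambda1 A * (∑ i : ZMod n, (A i k) ^ 2) ≤
      ∑ i : ZMod n, polyLen A i * (polyTau A i k) ^ 2 := by
  have hτnorm : ∀ i, ‖polyTau A i‖ = 1 := by
    intro i
    rw [polyTau, norm_smul, norm_inv, norm_norm,
      inv_mul_cancel₀ (norm_ne_zero_iff.mpr (sub_ne_zero.mpr (hne i)))]
  set u : EuclideanSpace ℝ (Fin N) → ℝ :=
    fun y => (EuclideanSpace.proj k : EuclideanSpace ℝ (Fin N) →L[ℝ] ℝ) y with hu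
  have huA : ∀ i, u (A i) = A i k := fun i => rfl
  have hnum : (∑ i : ZMod n, ∫ x in segment ℝ (A i) (A (i + 1)),
      ‖(fderiv ℝ u x (polyTau A i)) • polyTau A i‖ ^ 2 ∂(μH[1])) =
      ∑ i : ZMod n, polyLen A i * (polyTau A i k) ^ 2 := by
    refine Finset.sum_congr rfl fun i _ => ?_
    have hfd : ∀ x : EuclideanSpace ℝ (Fin N), fderiv ℝ u x =
        (EuclideanSpace.proj k : EuclideanSpace ℝ (Fin N) →L[ℝ] ℝ) := fun x =>
      (EuclideanSpace.proj k : EuclideanSpace ℝ (Fin N) →L[ℝ] ℝ).fderiv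
    have hconst : ∀ x : EuclideanSpace ℝ (Fin N),
        ‖(fderiv ℝ u x (polyTau A i)) • polyTau A i‖ ^ 2 = (polyTau A i k) ^ 2 := by
      intro x
      rw [hfd x]
      have : ((EuclideanSpace.proj k : EuclideanSpace ℝ (Fin N) →L[ℝ] ℝ)) (polyTau A i)
          = polyTau A i k := rfl
      rw [this, norm_smul, hτnorm i, mul_one, Real.norm_eq_abs, sq_abs]
    calc (∫ x in segment ℝ (A i) (A (i + 1)),
          ‖(fderiv ℝ u x (polyTau A i)) • polyTau A i‖ ^ 2 ∂(μH[1]))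
        = ∫ _ in segment ℝ (A i) (A (i + 1)), (polyTau A i k) ^ 2 ∂(μH[1]) := by
          simp_rw [hconst]
      _ = (μH[1] (segment ℝ (A i) (A (i + 1)))).toReal • (polyTau A i k) ^ 2 :=
          setIntegral_const _
      _ = polyLen A i * (polyTau A i k) ^ 2 := by
          rw [hausdorffMeasure_segment, edist_dist, ENNReal.toReal_ofReal dist_nonneg,
            dist_eq_norm, norm_sub_rev, smul_eq_mul, polyLen]
  have hsum0 : ∑ i : ZMod n, A i k = 0 := by
    have h : (∑ i : ZMod n, A i) k = ∑ i : ZMod n, A i k := by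
      rw [WithLp.ofLp_sum]; exact Finset.sum_apply k Finset.univ _
    rw [← h, hcenter]; rfl
  by_cases hd : (∑ i : ZMod n, (A i k) ^ 2) = 0
  · rw [hd, mul_zero]
    exact Finset.sum_nonneg fun i _ => mul_nonneg (norm_nonneg _) (sq_nonneg _)
  · have hdpos : 0 < ∑ i : ZMod n, (A i k) ^ 2 :=
      lt_of_le_of_ne (Finset.sum_nonneg fun i _ => sq_nonneg _) (Ne.symm hd)
    have hmem : (∑ i : ZMod n, polyLen A i * (polyTau A i k) ^ 2) /
        (∑ i : ZMod n, (A i k) ^ 2) ∈ { r : ℝ | ∃ u : EuclideanSpace ℝ (Fin N) → ℝ,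
        ContDiff ℝ (⊤ : ℕ∞) u ∧ (∑ i, u (A i)) = 0 ∧ (∑ i, u (A i) ^ 2) ≠ 0 ∧
        r = (∑ i, ∫ x in segment ℝ (A i) (A (i + 1)),
              ‖(fderiv ℝ u x (polyTau A i)) • polyTau A i‖ ^ 2 ∂(μH[1])) /
            (∑ i, u (A i) ^ 2) } := by
      refine ⟨u, (EuclideanSpace.proj k : EuclideanSpace ℝ (Fin N) →L[ℝ] ℝ).contDiff, ?_, ?_, ?_⟩
      · simp_rw [huA]; exact hsum0
      · simp_rw [huA]; exact hd
      · simp_rw [huA]; rw [hnum]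
    have hle : polyLambda1 A ≤ (∑ i : ZMod n, polyLen A i * (polyTau A i k) ^ 2) /
        (∑ i : ZMod n, (A i k) ^ 2) :=
      csInf_le ⟨0, fun r hr => rayleigh_nonneg A r hr⟩ hmem
    calc polyLambda1 A * (∑ i : ZMod n, (A i k) ^ 2)
        ≤ ((∑ i : ZMod n, polyLen A i * (polyTau A i k) ^ 2) /
          (∑ i : ZMod n, (A i k) ^ 2)) * (∑ i : ZMod n, (A i k) ^ 2) := by
          exact mul_le_mul_of_nonneg_right hle hdpos.le
      _ = ∑ i : ZMod n, polyLen A i * (polyTau A i k) ^ 2 := by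
          field_simp

end PolyAux


/-- **Equality case in the Reilly inequality for polygons, first consequences**: if a polygon
with center of mass at the origin satisfies `(∑ᵢ ℓᵢ) λ₁ᴬ = ∑ᵢ |Hᵢ|²`, then `Hᵢ = λ₁ᴬ Aᵢ` for
every `i`; in particular `λ₁ᴬ ≠ 0` and `|Aᵢ| = |Hᵢ|/λ₁ᴬ`. -/
theorem polygon_reilly_equality_case {N n : ℕ} [NeZero n]
    (A : ZMod n → EuclideanSpace ℝ (Fin N)) (hA : IsPolygon A)
    (hcenter : (∑ i : ZMod n, A i) = 0)
    (heq : (∑ i : ZMod n, polyLen A i) * polyLambda1 A = ∑ i : ZMod n, ‖polyH A i‖ ^ 2) :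
    (∀ i, polyH A i = polyLambda1 A • A i) ∧ polyLambda1 A ≠ 0 ∧
      ∀ i, ‖A i‖ = ‖polyH A i‖ / polyLambda1 A := by
  obtain ⟨hn3, hne, -, -⟩ := hA
  set L := polyLambda1 A with hLdef
  have hL0 : 0 ≤ L := PolyAux.lambda1_nonneg A
  have hℓpos : ∀ i, 0 < polyLen A i := fun i =>
    norm_pos_iff.mpr (sub_ne_zero.mpr (hne i))
  have hτnorm : ∀ i, ‖polyTau A i‖ = 1 := by
    intro i
    rw [polyTau, norm_smul, norm_inv, norm_norm,
      inv_mul_cancel₀ (norm_ne_zero_iff.mpr (sub_ne_zero.mpr (hne i)))]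
  have hSpos : 0 < ∑ i : ZMod n, polyLen A i :=
    Finset.sum_pos (fun i _ => hℓpos i) Finset.univ_nonempty
  set S := ∑ i : ZMod n, polyLen A i with hSdef
  set P := ∑ i : ZMod n, ‖A i‖ ^ 2 with hPdef
  set Q := ∑ i : ZMod n, ‖polyH A i‖ ^ 2 with hQdef
  -- H i = τ (i-1) - τ i
  have hHτ : ∀ i, polyH A i = polyTau A (i - 1) - polyTau A i := by
    intro i
    have h1 : ‖A i - A (i - 1)‖⁻¹ • (A i - A (i - 1)) = polyTau A (i - 1) := by
      rw [polyTau, sub_add_cancel]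
    have h2 : ‖A i - A (i + 1)‖⁻¹ • (A i - A (i + 1)) = -polyTau A i := by
      rw [polyTau, norm_sub_rev (A i), ← smul_neg, neg_sub]
    rw [polyH, h1, h2, ← sub_eq_add_neg]
  -- ℓ i • τ i = A (i+1) - A i
  have hℓτ : ∀ i, polyLen A i • polyTau A i = A (i + 1) - A i := by
    intro i
    rw [polyTau, polyLen, smul_smul,
      mul_inv_cancel₀ (norm_ne_zero_iff.mpr (sub_ne_zero.mpr (hne i))), one_smul]
  -- ∑ ⟪H i, A i⟫ = S
  have hHA : ∑ i : ZMod n, ⟪polyH A i, A i⟫ = S := by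
    have hre : ∑ i : ZMod n, ⟪polyTau A i, A (i + 1)⟫
        = ∑ i : ZMod n, ⟪polyTau A (i - 1), A i⟫ := by
      refine Fintype.sum_equiv (Equiv.addRight (1 : ZMod n))
        (fun i => ⟪polyTau A i, A (i + 1)⟫)
        (fun j => ⟪polyTau A (j - 1), A j⟫) (fun i => by simp)
    have hττ : ∀ i, ⟪polyTau A i, A (i + 1) - A i⟫ = polyLen A i := by
      intro i
      rw [polyTau, real_inner_smul_left, real_inner_self_eq_norm_sq, polyLen, sq,
        inv_mul_cancel_left₀ (norm_ne_zero_iff.mpr (sub_ne_zero.mpr (hne i)))]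
    calc ∑ i : ZMod n, ⟪polyH A i, A i⟫
        = ∑ i : ZMod n, (⟪polyTau A (i - 1), A i⟫ - ⟪polyTau A i, A i⟫) := by
          refine Finset.sum_congr rfl fun i _ => ?_
          rw [hHτ i, inner_sub_left]
      _ = ∑ i : ZMod n, ⟪polyTau A (i - 1), A i⟫ - ∑ i : ZMod n, ⟪polyTau A i, A i⟫ :=
          Finset.sum_sub_distrib _ _
      _ = ∑ i : ZMod n, ⟪polyTau A i, A (i + 1)⟫ - ∑ i : ZMod n, ⟪polyTau A i, A i⟫ := by
          rw [hre]
      _ = ∑ i : ZMod n, ⟪polyTau A i, A (i + 1) - A i⟫ := by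
          rw [← Finset.sum_sub_distrib]
          exact Finset.sum_congr rfl fun i _ => (inner_sub_right _ _ _).symm
      _ = S := Finset.sum_congr rfl fun i _ => hττ i
  -- L * P ≤ S
  have hLP : L * P ≤ S := by
    calc L * P = ∑ k : Fin N, L * ∑ i : ZMod n, (A i k) ^ 2 := by
          rw [← Finset.mul_sum]
          congr 1
          rw [hPdef]
          simp_rw [PolyAux.euclid_norm_sq]
          exact Finset.sum_comm
      _ ≤ ∑ k : Fin N, ∑ i : ZMod n, polyLen A i * (polyTau A i k) ^ 2 :=
          Finset.sum_le_sum fun k _ => PolyAux.coord_bound A hne hcenter k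
      _ = S := by
          rw [Finset.sum_comm]
          refine Finset.sum_congr rfl fun i _ => ?_
          rw [← Finset.mul_sum, ← PolyAux.euclid_norm_sq, hτnorm i, one_pow, mul_one]
  -- S ≤ L * P
  have hSQ : S ^ 2 ≤ Q * P := by
    have h1 : S ≤ ∑ i : ZMod n, ‖polyH A i‖ * ‖A i‖ := by
      rw [← hHA]
      exact Finset.sum_le_sum fun i _ => real_inner_le_norm _ _
    have h2 : (∑ i : ZMod n, ‖polyH A i‖ * ‖A i‖) ^ 2 ≤ Q * P :=
      Finset.sum_mul_sq_le_sq_mul_sq _ _ _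
    calc S ^ 2 ≤ (∑ i : ZMod n, ‖polyH A i‖ * ‖A i‖) ^ 2 := by
          apply pow_le_pow_left₀ hSpos.le h1 2
      _ ≤ Q * P := h2
  have hSLP : S ≤ L * P := by
    have : S * S ≤ S * (L * P) := by
      calc S * S = S ^ 2 := (sq S).symm
        _ ≤ Q * P := hSQ
        _ = S * L * P := by rw [heq]
        _ = S * (L * P) := mul_assoc _ _ _
    exact le_of_mul_le_mul_left this hSpos
  have hLPS : L * P = S := le_antisymm hLP hSLP
  -- each H i = L • A i
  have hzero : ∑ i : ZMod n, ‖polyH A i - L • A i‖ ^ 2 = 0 := by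
    have hexp : ∀ i : ZMod n, ‖polyH A i - L • A i‖ ^ 2
        = ‖polyH A i‖ ^ 2 - 2 * L * ⟪polyH A i, A i⟫ + L ^ 2 * ‖A i‖ ^ 2 := by
      intro i
      rw [norm_sub_sq_real, real_inner_smul_right, norm_smul, mul_pow, Real.norm_eq_abs, sq_abs]
      ring
    calc ∑ i : ZMod n, ‖polyH A i - L • A i‖ ^ 2
        = Q - 2 * L * (∑ i : ZMod n, ⟪polyH A i, A i⟫) + L ^ 2 * P := by
          simp_rw [hexp]
          rw [Finset.sum_add_distrib, Finset.sum_sub_distrib, ← Finset.mul_sum,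
            ← Finset.mul_sum]
      _ = 0 := by rw [hHA, ← heq, ← hLPS]; ring
  have hHiLA : ∀ i, polyH A i = L • A i := by
    intro i
    have := (Finset.sum_eq_zero_iff_of_nonneg
      (fun i _ => sq_nonneg (‖polyH A i - L • A i‖))).mp hzero i (Finset.mem_univ i)
    have hnz : ‖polyH A i - L • A i‖ = 0 := by
      have := sq_eq_zero_iff.mp this
      exact this
    rw [← sub_eq_zero]
    exact norm_eq_zero.mp hnz
  -- L ≠ 0
  have hLne : L ≠ 0 := by
    intro hL
    have hH0 : ∀ i, polyH A i = 0 := by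
      intro i; rw [hHiLA i, hL, zero_smul]
    have hstep : ∀ j : ZMod n, polyTau A (j + 1) = polyTau A j := by
      intro j
      have := hH0 (j + 1)
      rw [hHτ (j + 1), add_sub_cancel_right, sub_eq_zero] at this
      exact this.symm
    have hnat : ∀ m : ℕ, polyTau A (m : ZMod n) = polyTau A 0 := by
      intro m
      induction m with
      | zero => simp
      | succ m ih =>
        rw [Nat.cast_succ, hstep, ih]
    have hconst : ∀ j : ZMod n, polyTau A j = polyTau A 0 := by
      intro j
      have := hnat j.val
      rwa [ZMod.natCast_zmod_val] at this
    have htel : ∑ i : ZMod n, (A (i + 1) - A i) = 0 := by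
      rw [Finset.sum_sub_distrib]
      rw [show ∑ i : ZMod n, A (i + 1) = ∑ i : ZMod n, A i from
        Fintype.sum_equiv (Equiv.addRight (1 : ZMod n)) _ _ (fun i => rfl), sub_self]
    have : (S : ℝ) • polyTau A 0 = 0 := by
      rw [← htel]
      rw [hSdef, Finset.sum_smul]
      refine Finset.sum_congr rfl fun i _ => ?_
      rw [← hℓτ i, hconst i]
    rcases smul_eq_zero.mp this with h | h
    · exact hSpos.ne' h
    · have := hτnorm 0
      rw [h, norm_zero] at this
      norm_num at this
  have hLpos : 0 < L := lt_of_le_of_ne hL0 (Ne.symm hLne)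
  refine ⟨hHiLA, hLne, fun i => ?_⟩
  rw [hHiLA i, norm_smul, Real.norm_eq_abs, abs_of_pos hLpos,
    mul_div_cancel_left₀ _ hLne]
end
end

section
/- Spectrum of an equilateral polygon: let n ≥ 3, ℓ > 0 and L = nℓ. Define Spec as the set of λ ∈ ℝ for which there exists a nonzero pair (α, β) ∈ ℝ^n × ℝ^n satisfying, cyclically in i (indices mod n), α_{i+1} = α_i + β_i and λ α_{i+1} = (β_i − β_{i+1})/ℓ. Then Spec = { (4n/L) · sin²(kπ/n) : k ∈ {0, 1, …, ⌊n/2⌋} }. In particular the smallest nonzero element of Spec is (4n/L) sin²(π/n). -/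
open scoped Real

noncomputable section

/-- The spectrum of an equilateral polygon with `n` sides of length `ℓ`: the set of `λ ∈ ℝ`
admitting a nonzero piecewise-affine eigenfunction, encoded by `(α, β)` with
`αᵢ₊₁ = αᵢ + βᵢ` (continuity at the vertices) and `λ αᵢ₊₁ = (βᵢ − βᵢ₊₁)/ℓ`
(eigenvalue equation at the vertices), indices cyclic mod `n`. -/
def equilateralSpec (n : ℕ) [NeZero n] (ℓ : ℝ) : Set ℝ :=
  { lam : ℝ | ∃ α β : ZMod n → ℝ, (α, β) ≠ 0 ∧
      (∀ i, α (i + 1) = α i + β i) ∧ (∀ i, lam * α (i + 1) = (β i - β (i + 1)) / ℓ) }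

/-! Eliminating `β = α (· + 1) - α` turns the vertex conditions into the eigenvalue equation
`Δα = λℓ α` for the discrete Laplacian `Δ` of the `n`-cycle. Its eigenvalues are read off
from the discrete Fourier transform, which diagonalises `Δ` with eigenvalue
`2 - 2 cos (2πk/n) = 4 sin² (kπ/n)` at frequency `k`; the real parts of the characters are
real eigenvectors. Since `k` and `n - k` give the same eigenvalue, `k ≤ n / 2` suffices. -/

open Complex ZMod

namespace ZMod

variable {n : ℕ} [NeZero n]

theorem dft_comp_add_right {E : Type*} [AddCommGroup E] [Module ℂ E] (Φ : ZMod n → E)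
    (c k : ZMod n) : 𝓕 (fun j => Φ (j + c)) k = stdAddChar (c * k) • 𝓕 Φ k := by
  rw [dft_apply, dft_apply, Finset.smul_sum]
  refine Fintype.sum_equiv (Equiv.addRight c) _ _ fun j => ?_
  rw [Equiv.coe_addRight, smul_smul, ← AddChar.map_add_eq_mul]
  congr 2
  ring

theorem stdAddChar_add_stdAddChar_neg (k : ZMod n) :
    stdAddChar k + stdAddChar (-k) = (2 * (stdAddChar k).re : ℝ) := by
  rw [AddChar.map_neg_eq_conj, add_conj]

end ZMod

namespace EquilateralPolygon

def cycleLaplacian {n : ℕ} {E : Type*} [AddCommGroup E] (f : ZMod n → E) (j : ZMod n) : E :=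
  2 • f j - f (j - 1) - f (j + 1)

def cycleLaplacianSpectrum (n : ℕ) : Set ℝ :=
  {μ | ∃ α : ZMod n → ℝ, α ≠ 0 ∧ cycleLaplacian α = μ • α}

variable {n : ℕ} [NeZero n]

theorem mem_equilateralSpec_iff {ℓ lam : ℝ} (hℓ : ℓ ≠ 0) :
    lam ∈ equilateralSpec n ℓ ↔ lam * ℓ ∈ cycleLaplacianSpectrum n := by
  simp only [equilateralSpec, cycleLaplacianSpectrum, cycleLaplacian, Set.mem_ofPred_eq,
    funext_iff, Pi.smul_apply, smul_eq_mul, two_nsmul]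
  constructor
  · rintro ⟨α, β, hne, hcont, heig⟩
    have hβ : β = fun i => α (i + 1) - α i := funext fun i => by rw [hcont]; ring
    subst hβ
    refine ⟨α, fun hα => hne ?_, fun j => ?_⟩
    · simp only [hα, Pi.zero_apply, sub_self]
      rfl
    · have h := heig (j - 1)
      simp only [sub_add_cancel] at h
      field_simp at h
      linarith
  · rintro ⟨α, hα, hΔ⟩
    refine ⟨α, fun i => α (i + 1) - α i, fun h => hα (congrArg Prod.fst h), fun i => by ring,
      fun i => ?_⟩
    have h := hΔ (i + 1)
    rw [add_sub_cancel_right] at h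
    field_simp
    linarith

theorem dft_cycleLaplacian {E : Type*} [AddCommGroup E] [Module ℂ E] (Φ : ZMod n → E)
    (k : ZMod n) : 𝓕 (cycleLaplacian Φ) k = ((2 - 2 * (stdAddChar k).re : ℝ) : ℂ) • 𝓕 Φ k := by
  have hΔ : cycleLaplacian Φ = 2 • Φ - (fun j => Φ (j + -1)) - fun j => Φ (j + 1) := by
    funext j
    simp [cycleLaplacian, sub_eq_add_neg]
  rw [hΔ, map_sub, map_sub, map_nsmul, Pi.sub_apply, Pi.sub_apply, Pi.smul_apply,
    dft_comp_add_right, dft_comp_add_right, neg_one_mul, one_mul, ofReal_sub,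
    ← stdAddChar_add_stdAddChar_neg, sub_smul, add_smul, ofReal_ofNat]
  module

theorem exists_eq_of_mem_cycleLaplacianSpectrum {μ : ℝ} (hμ : μ ∈ cycleLaplacianSpectrum n) :
    ∃ k : ZMod n, μ = 2 - 2 * (stdAddChar k).re := by
  obtain ⟨α, hα, hΔ⟩ := hμ
  set Φ : ZMod n → ℂ := fun j => α j
  have hΦ : Φ ≠ 0 := fun h => hα (funext fun j => by simpa [Φ] using congrFun h j)
  obtain ⟨k, hk⟩ := Function.ne_iff.mp fun h => hΦ ((LinearEquiv.map_eq_zero_iff dft).mp h)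
  refine ⟨k, ofReal_injective (mul_right_cancel₀ hk ?_)⟩
  have hΔΦ : cycleLaplacian Φ = (μ : ℂ) • Φ := by
    funext j
    simpa [Φ, cycleLaplacian] using congrArg ((↑) : ℝ → ℂ) (congrFun hΔ j)
  have h := dft_cycleLaplacian Φ k
  rw [hΔΦ, _root_.map_smul, Pi.smul_apply, smul_eq_mul, smul_eq_mul] at h
  exact h

theorem cycleLaplacian_stdAddChar_re (k : ZMod n) :
    cycleLaplacian (fun j => (stdAddChar (k * j)).re) =
      (2 - 2 * (stdAddChar k).re) • fun j => (stdAddChar (k * j)).re := by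
  funext j
  have h : stdAddChar (k * (j - 1)) + stdAddChar (k * (j + 1)) =
      stdAddChar (k * j) * (stdAddChar k + stdAddChar (-k)) := by
    simp only [sub_eq_add_neg, mul_add, mul_neg, mul_one, AddChar.map_add_eq_mul]
    ring
  rw [stdAddChar_add_stdAddChar_neg] at h
  have h' := congrArg Complex.re h
  simp only [add_re, re_mul_ofReal] at h'
  simp only [cycleLaplacian, Pi.smul_apply, smul_eq_mul, two_nsmul]
  linarith

theorem mem_cycleLaplacianSpectrum (k : ZMod n) :
    2 - 2 * (stdAddChar k).re ∈ cycleLaplacianSpectrum n :=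
  ⟨_, Function.ne_iff.mpr ⟨0, by simp⟩, cycleLaplacian_stdAddChar_re k⟩

theorem two_sub_two_mul_stdAddChar_natCast_re (m : ℕ) :
    2 - 2 * (stdAddChar (m : ZMod n)).re = 4 * Real.sin (m * π / n) ^ 2 := by
  have h : (2 * π * I * m / n : ℂ) = ((2 * (m * π / n) : ℝ) : ℂ) * I := by push_cast; ring
  rw [stdAddChar_apply, toCircle_natCast, h, exp_ofReal_mul_I_re, Real.cos_two_mul_eq_one_sub]
  ring

theorem sin_sq_nat_sub_mul_pi_div {m : ℕ} (hm : m ≤ n) :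
    Real.sin ((n - m : ℕ) * π / n) ^ 2 = Real.sin (m * π / n) ^ 2 := by
  have hn : (n : ℝ) ≠ 0 := NeZero.ne _
  rw [Nat.cast_sub hm, sub_mul, sub_div, mul_div_cancel_left₀ _ hn, Real.sin_pi_sub]

theorem cycleLaplacianSpectrum_eq :
    cycleLaplacianSpectrum n = {μ | ∃ k : ℕ, k ≤ n / 2 ∧ μ = 4 * Real.sin (k * π / n) ^ 2} := by
  ext μ
  constructor
  · intro hμ
    obtain ⟨k, rfl⟩ := exists_eq_of_mem_cycleLaplacianSpectrum hμ
    rw [← natCast_zmod_val k, two_sub_two_mul_stdAddChar_natCast_re]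
    by_cases hk : k.val ≤ n / 2
    · exact ⟨k.val, hk, rfl⟩
    · have hlt := val_lt k
      exact ⟨n - k.val, by omega, by rw [sin_sq_nat_sub_mul_pi_div hlt.le]⟩
  · rintro ⟨k, -, rfl⟩
    rw [← two_sub_two_mul_stdAddChar_natCast_re]
    exact mem_cycleLaplacianSpectrum _

theorem equilateralSpec_eq {ℓ : ℝ} (hℓ : ℓ ≠ 0) :
    equilateralSpec n ℓ = {x | ∃ k : ℕ, k ≤ n / 2 ∧ x = 4 / ℓ * Real.sin (k * π / n) ^ 2} := by
  ext lam
  rw [mem_equilateralSpec_iff hℓ, cycleLaplacianSpectrum_eq]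
  simp only [Set.mem_ofPred_eq]
  congr! 3
  rw [div_mul_eq_mul_div, eq_div_iff hℓ]

theorem sin_sq_pi_div_le_sin_sq_mul_pi_div {k : ℕ} (hk₀ : 1 ≤ k) (hk : k ≤ n / 2) :
    Real.sin (π / n) ^ 2 ≤ Real.sin (k * π / n) ^ 2 := by
  have hn : (0 : ℝ) < n := Nat.cast_pos.mpr (Nat.pos_of_neZero n)
  have hk₀' : (1 : ℝ) ≤ k := by exact_mod_cast hk₀
  have hk' : (2 * k : ℝ) ≤ n := by exact_mod_cast (by omega : 2 * k ≤ n)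
  have hpos : 0 < π / n := by positivity
  have hle : π / n ≤ k * π / n := by
    gcongr
    exact le_mul_of_one_le_left Real.pi_pos.le hk₀'
  have hle' : k * π / n ≤ π / 2 := by
    rw [div_le_div_iff₀ hn two_pos]
    nlinarith [Real.pi_pos]
  gcongr
  · exact Real.sin_nonneg_of_nonneg_of_le_pi hpos.le (by linarith)
  · exact Real.sin_le_sin_of_le_of_le_pi_div_two (by linarith) hle' hle

end EquilateralPolygon

open EquilateralPolygon in
/-- **Spectrum of an equilateral polygon**: for an equilateral polygon with `n ≥ 3` sides of
length `ℓ > 0` and perimeter `L = nℓ`, the spectrum is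
`{(4n/L) sin²(kπ/n) : 0 ≤ k ≤ ⌊n/2⌋}`; in particular its smallest nonzero element is
`(4n/L) sin²(π/n)`. -/
theorem equilateral_polygon_spectrum (n : ℕ) [NeZero n] (hn : 3 ≤ n) (ℓ L : ℝ)
    (hℓ : 0 < ℓ) (hL : L = n * ℓ) :
    equilateralSpec n ℓ =
        { x : ℝ | ∃ k : ℕ, k ≤ n / 2 ∧ x = (4 * n / L) * Real.sin (k * π / n) ^ 2 } ∧
      IsLeast { x : ℝ | x ∈ equilateralSpec n ℓ ∧ x ≠ 0 }
        ((4 * n / L) * Real.sin (π / n) ^ 2) := by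
  have hcoef : 4 * (n : ℝ) / L = 4 / ℓ := by
    rw [hL]
    field_simp [(NeZero.ne (n : ℝ))]
  rw [hcoef]
  have hspec := equilateralSpec_eq (n := n) hℓ.ne'
  have hsin : 0 < Real.sin (π / n) := by
    have hn' : (3 : ℝ) ≤ n := by exact_mod_cast hn
    apply Real.sin_pos_of_pos_of_lt_pi (by positivity)
    rw [div_lt_iff₀ (by positivity)]
    nlinarith [Real.pi_pos]
  refine ⟨hspec, ⟨?_, by positivity⟩, ?_⟩
  · rw [hspec]
    exact ⟨1, by omega, by rw [Nat.cast_one, one_mul]⟩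
  · rintro x ⟨hx, hx₀⟩
    rw [hspec] at hx
    obtain ⟨k, hk, rfl⟩ := hx
    have hk₀ : 1 ≤ k := Nat.one_le_iff_ne_zero.mpr fun h => hx₀ (by simp [h])
    exact mul_le_mul_of_nonneg_left (sin_sq_pi_div_le_sin_sq_mul_pi_div hk₀ hk) (by positivity)
end
end

section
/- Spectrum of the trapeze T_θ: let θ ∈ (0, π/2) and let T_θ be the trapeze with vertices A_1 = (cos θ, sin θ), A_2 = (−cos θ, sin θ), A_3 = (−tan θ · sin θ, −sin θ), A_4 = (tan θ · sin θ, −sin θ) in ℝ², whose side lengths are ℓ_1 = 2cos θ, ℓ_2 = ℓ_4 = 1/cos θ, ℓ_3 = 2 tan θ sin θ. Define Spec(T_θ) as the set of λ ∈ ℝ for which there exists a nonzero (α, β) ∈ ℝ⁴ × ℝ⁴ satisfying, cyclically in i (indices mod 4), α_{i+1} = α_i + β_i and λ α_i = β_{i−1}/ℓ_{i−1} − β_i/ℓ_i. Then Spec(T_θ) = { 0, 2cos θ, 1/(cos θ · sin² θ) }, and 2cos θ is the smallest nonzero element of Spec(T_θ). -/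
/-!
Eliminating `β = (α (i + 1) - α i)ᵢ`, the system says that `α` (its value at the vertex `Aᵢ`,
with `A₀ = A₄`) is an eigenvector of the Laplacian of the 4-cycle with conductances `1 / ℓᵢ`.
This operator is symmetric, so eigenvectors for distinct eigenvalues are orthogonal. With
`c = cos θ`, `s = sin θ` it has the pairwise orthogonal eigenvectors `(1, 1, 1, 1)` for `0`,
`(-1, 1, 1, -1)` and `(s², c², -c², -s²)` for `2c`, and `(-c², s², -s², c²)` for `1 / (c s²)`;
an eigenvector for any other eigenvalue is orthogonal to all four, hence zero.
Finally `2c ≤ 1 / (c s²)` because `2 c² s² ≤ (c² + s²)² = 1`.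
-/

open scoped Real

noncomputable section

/-- The side lengths of the trapeze `T_θ` with vertices
`A₁ = (cos θ, sin θ)`, `A₂ = (−cos θ, sin θ)`, `A₃ = (−tan θ sin θ, −sin θ)`,
`A₄ = (tan θ sin θ, −sin θ)`: `ℓ₁ = 2 cos θ`, `ℓ₂ = ℓ₄ = 1/cos θ`, `ℓ₃ = 2 tan θ sin θ`.
The index `i ∈ ZMod 4` labels the side `[Aᵢ, Aᵢ₊₁]` (with `0 = 4`). -/
def trapezeLen (θ : ℝ) : ZMod 4 → ℝ := fun i =>
  if i = 1 then 2 * Real.cos θ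
  else if i = 2 then 1 / Real.cos θ
  else if i = 3 then 2 * Real.tan θ * Real.sin θ
  else 1 / Real.cos θ

/-- The spectrum of the trapeze `T_θ`: the set of `λ ∈ ℝ` admitting a nonzero
piecewise-affine eigenfunction, encoded by `(α, β)` with `αᵢ₊₁ = αᵢ + βᵢ` and
`λ αᵢ = βᵢ₋₁/ℓᵢ₋₁ − βᵢ/ℓᵢ`, indices cyclic mod `4`. -/
def trapezeSpec (θ : ℝ) : Set ℝ :=
  { lam : ℝ | ∃ α β : ZMod 4 → ℝ, (α, β) ≠ 0 ∧
      (∀ i, α (i + 1) = α i + β i) ∧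
      (∀ i, lam * α i = β (i - 1) / trapezeLen θ (i - 1) - β i / trapezeLen θ i) }

open Finset

section CycleLaplacian

variable {n : ℕ}

def cycleLaplacian (ℓ f : ZMod n → ℝ) (i : ZMod n) : ℝ :=
  (f i - f (i - 1)) / ℓ (i - 1) - (f (i + 1) - f i) / ℓ i

theorem exists_eigenpair_iff_cycleLaplacian (ℓ : ZMod n → ℝ) (lam : ℝ) :
    (∃ α β : ZMod n → ℝ, (α, β) ≠ 0 ∧ (∀ i, α (i + 1) = α i + β i) ∧
      ∀ i, lam * α i = β (i - 1) / ℓ (i - 1) - β i / ℓ i) ↔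
    ∃ f ≠ 0, cycleLaplacian ℓ f = lam • f := by
  constructor
  · rintro ⟨α, β, hne, hαβ, heq⟩
    have hβ : β = fun i => α (i + 1) - α i := funext fun i => by rw [hαβ]; ring
    subst hβ
    refine ⟨α, fun hα => hne (by subst hα; ext <;> simp), funext fun i => ?_⟩
    simp [cycleLaplacian, heq]
  · rintro ⟨f, hf, hL⟩
    refine ⟨f, fun i => f (i + 1) - f i, fun h => hf (congrArg Prod.fst h),
      fun i => by ring, fun i => ?_⟩
    simpa [cycleLaplacian] using (congrFun hL i).symm

theorem cycleLaplacian_const (ℓ : ZMod n → ℝ) (a : ℝ) :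
    cycleLaplacian ℓ (fun _ => a) = 0 := by
  funext i; simp [cycleLaplacian]

variable [NeZero n]

theorem sum_cycleLaplacian_mul (ℓ f g : ZMod n → ℝ) :
    ∑ i, cycleLaplacian ℓ f i * g i = ∑ i, (f (i + 1) - f i) * (g (i + 1) - g i) / ℓ i := by
  have hshift : ∑ i, (f i - f (i - 1)) / ℓ (i - 1) * g i =
      ∑ i, (f (i + 1) - f i) / ℓ i * g (i + 1) :=
    Fintype.sum_equiv (Equiv.subRight 1) _ _ fun i => by simp
  simp only [cycleLaplacian, sub_mul]
  rw [sum_sub_distrib, hshift, ← sum_sub_distrib]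
  exact sum_congr rfl fun i _ => by ring

theorem sum_mul_eq_zero_of_cycleLaplacian_eq_smul {ℓ f g : ZMod n → ℝ} {lam μ : ℝ}
    (hf : cycleLaplacian ℓ f = lam • f) (hg : cycleLaplacian ℓ g = μ • g) (hne : lam ≠ μ) :
    ∑ i, f i * g i = 0 := by
  have hsymm : ∑ i, cycleLaplacian ℓ f i * g i = ∑ i, f i * cycleLaplacian ℓ g i := by
    simp only [sum_cycleLaplacian_mul, mul_comm (f _)]
    exact sum_congr rfl fun i _ => by ring
  rw [hf, hg] at hsymm
  simp only [Pi.smul_apply, smul_eq_mul, mul_assoc, mul_left_comm _ μ, ← mul_sum] at hsymm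
  exact (mul_eq_zero.mp (by rw [sub_mul, hsymm, sub_self])).resolve_left (sub_ne_zero.mpr hne)

end CycleLaplacian

section ZModFour

theorem zmod_four_cases (i : ZMod 4) : i = 0 ∨ i = 1 ∨ i = 2 ∨ i = 3 := by
  decide +revert

theorem cycleLaplacian_eq_smul_iff_four (ℓ f : ZMod 4 → ℝ) (μ : ℝ) :
    cycleLaplacian ℓ f = μ • f ↔
      (f 0 - f 3) / ℓ 3 - (f 1 - f 0) / ℓ 0 = μ * f 0 ∧
      (f 1 - f 0) / ℓ 0 - (f 2 - f 1) / ℓ 1 = μ * f 1 ∧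
      (f 2 - f 1) / ℓ 1 - (f 3 - f 2) / ℓ 2 = μ * f 2 ∧
      (f 3 - f 2) / ℓ 2 - (f 0 - f 3) / ℓ 3 = μ * f 3 := by
  rw [funext_iff]
  constructor
  · intro h
    exact ⟨h 0, h 1, h 2, h 3⟩
  · rintro ⟨h0, h1, h2, h3⟩ i
    obtain rfl | rfl | rfl | rfl := zmod_four_cases i
    exacts [h0, h1, h2, h3]

theorem sum_zmod_four (f : ZMod 4 → ℝ) : ∑ i, f i = f 0 + f 1 + f 2 + f 3 :=
  Fin.sum_univ_four f

def vec4 (a b c d : ℝ) : ZMod 4 → ℝ := fun i =>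
  if i = 0 then a else if i = 1 then b else if i = 2 then c else d

@[simp] theorem vec4_zero (a b c d : ℝ) : vec4 a b c d 0 = a := rfl
@[simp] theorem vec4_one (a b c d : ℝ) : vec4 a b c d 1 = b := rfl
@[simp] theorem vec4_two (a b c d : ℝ) : vec4 a b c d 2 = c := rfl
@[simp] theorem vec4_three (a b c d : ℝ) : vec4 a b c d 3 = d := rfl

theorem eq_zero_of_orthogonal_vec4 {a b : ℝ} (hab : a ^ 2 + b ^ 2 ≠ 0) {f : ZMod 4 → ℝ}
    (h₁ : ∑ i, f i * 1 = 0) (h₂ : ∑ i, f i * vec4 (-1) 1 1 (-1) i = 0)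
    (h₃ : ∑ i, f i * vec4 a b (-b) (-a) i = 0) (h₄ : ∑ i, f i * vec4 (-b) a (-a) b i = 0) :
    f = 0 := by
  simp only [sum_zmod_four, vec4_zero, vec4_one, vec4_two, vec4_three] at h₁ h₂ h₃ h₄
  -- the four vectors are pairwise orthogonal: these are the coefficients of the orthogonal
  -- expansion of the `i`-th coordinate vector
  have hcoord : ∀ i, (a ^ 2 + b ^ 2) * f i = 0 := by
    intro i
    obtain rfl | rfl | rfl | rfl := zmod_four_cases i
    · linear_combination (a ^ 2 + b ^ 2) / 4 * (h₁ - h₂) + a / 2 * h₃ - b / 2 * h₄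
    · linear_combination (a ^ 2 + b ^ 2) / 4 * (h₁ + h₂) + b / 2 * h₃ + a / 2 * h₄
    · linear_combination (a ^ 2 + b ^ 2) / 4 * (h₁ + h₂) - b / 2 * h₃ - a / 2 * h₄
    · linear_combination (a ^ 2 + b ^ 2) / 4 * (h₁ - h₂) - a / 2 * h₃ + b / 2 * h₄
  exact funext fun i => (mul_eq_zero.mp (hcoord i)).resolve_left hab

end ZModFour

section Trapeze

open Real

variable {θ : ℝ}

theorem trapezeLen_zero : trapezeLen θ 0 = 1 / cos θ := by simp +decide [trapezeLen]
theorem trapezeLen_one : trapezeLen θ 1 = 2 * cos θ := by simp [trapezeLen]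
theorem trapezeLen_two : trapezeLen θ 2 = 1 / cos θ := by simp +decide [trapezeLen]
theorem trapezeLen_three : trapezeLen θ 3 = 2 * sin θ ^ 2 / cos θ := by
  simp +decide [trapezeLen, tan_eq_sin_div_cos]; ring

theorem cycleLaplacian_trapezeLen_even_mode (hc : cos θ ≠ 0) :
    cycleLaplacian (trapezeLen θ) (vec4 (-1) 1 1 (-1)) = (2 * cos θ) • vec4 (-1) 1 1 (-1) := by
  rw [cycleLaplacian_eq_smul_iff_four]
  simp only [vec4_zero, vec4_one, vec4_two, vec4_three, trapezeLen_zero, trapezeLen_one,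
    trapezeLen_two, trapezeLen_three]
  refine ⟨?_, ?_, ?_, ?_⟩ <;> field_simp <;> ring

theorem cycleLaplacian_trapezeLen_odd_mode (hc : cos θ ≠ 0) (hs : sin θ ≠ 0) :
    cycleLaplacian (trapezeLen θ) (vec4 (sin θ ^ 2) (cos θ ^ 2) (-cos θ ^ 2) (-sin θ ^ 2)) =
      (2 * cos θ) • vec4 (sin θ ^ 2) (cos θ ^ 2) (-cos θ ^ 2) (-sin θ ^ 2) := by
  rw [cycleLaplacian_eq_smul_iff_four]
  simp only [vec4_zero, vec4_one, vec4_two, vec4_three, trapezeLen_zero, trapezeLen_one,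
    trapezeLen_two, trapezeLen_three]
  refine ⟨?_, ?_, ?_, ?_⟩ <;> field_simp <;> grind [sin_sq_add_cos_sq]

theorem cycleLaplacian_trapezeLen_odd_mode' (hc : cos θ ≠ 0) (hs : sin θ ≠ 0) :
    cycleLaplacian (trapezeLen θ) (vec4 (-cos θ ^ 2) (sin θ ^ 2) (-sin θ ^ 2) (cos θ ^ 2)) =
      (1 / (cos θ * sin θ ^ 2)) • vec4 (-cos θ ^ 2) (sin θ ^ 2) (-sin θ ^ 2) (cos θ ^ 2) := by
  rw [cycleLaplacian_eq_smul_iff_four]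
  simp only [vec4_zero, vec4_one, vec4_two, vec4_three, trapezeLen_zero, trapezeLen_one,
    trapezeLen_two, trapezeLen_three]
  refine ⟨?_, ?_, ?_, ?_⟩ <;> field_simp <;> grind [sin_sq_add_cos_sq]

theorem trapezeSpec_eq (hc : cos θ ≠ 0) (hs : sin θ ≠ 0) :
    trapezeSpec θ = {0, 2 * cos θ, 1 / (cos θ * sin θ ^ 2)} := by
  have hconst : cycleLaplacian (trapezeLen θ) (fun _ => 1) = (0 : ℝ) • fun _ => 1 := by
    rw [zero_smul, cycleLaplacian_const]
  ext lam
  refine (exists_eigenpair_iff_cycleLaplacian (trapezeLen θ) lam).trans ⟨?_, ?_⟩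
  · rintro ⟨f, hf, hL⟩
    by_contra hlam
    simp only [Set.mem_insert_iff, Set.mem_singleton_iff, not_or] at hlam
    obtain ⟨h₀, h₁, h₂⟩ := hlam
    have orth : ∀ {g : ZMod 4 → ℝ} {μ : ℝ}, cycleLaplacian (trapezeLen θ) g = μ • g →
        lam ≠ μ → ∑ i, f i * g i = 0 :=
      sum_mul_eq_zero_of_cycleLaplacian_eq_smul hL
    exact hf (eq_zero_of_orthogonal_vec4 (by positivity) (orth hconst h₀)
      (orth (cycleLaplacian_trapezeLen_even_mode hc) h₁)
      (orth (cycleLaplacian_trapezeLen_odd_mode hc hs) h₁)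
      (orth (cycleLaplacian_trapezeLen_odd_mode' hc hs) h₂))
  · rintro (rfl | rfl | rfl)
    · exact ⟨_, one_ne_zero, hconst⟩
    · exact ⟨_, fun h => by simpa using congrFun h 0, cycleLaplacian_trapezeLen_even_mode hc⟩
    · exact ⟨_, fun h => by simpa [hc] using congrFun h 0,
        cycleLaplacian_trapezeLen_odd_mode' hc hs⟩

theorem two_mul_cos_le_one_div_cos_mul_sin_sq (hc : 0 < cos θ) (hs : sin θ ≠ 0) :
    2 * cos θ ≤ 1 / (cos θ * sin θ ^ 2) := by
  rw [le_div_iff₀ (by positivity)]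
  nlinarith [sq_nonneg (sin θ ^ 2 - cos θ ^ 2), sin_sq_add_cos_sq θ]

end Trapeze

/-- **Spectrum of the trapeze `T_θ`**: for `θ ∈ (0, π/2)`,
`Spec(T_θ) = {0, 2 cos θ, 1/(cos θ sin² θ)}`, and `2 cos θ` is its smallest nonzero
element. -/
theorem trapeze_spectrum (θ : ℝ) (hθ : θ ∈ Set.Ioo 0 (π / 2)) :
    trapezeSpec θ = {0, 2 * Real.cos θ, 1 / (Real.cos θ * Real.sin θ ^ 2)} ∧
      IsLeast { x : ℝ | x ∈ trapezeSpec θ ∧ x ≠ 0 } (2 * Real.cos θ) := by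
  have hc : 0 < Real.cos θ := Real.cos_pos_of_mem_Ioo ⟨by linarith [hθ.1, Real.pi_pos], hθ.2⟩
  have hs : 0 < Real.sin θ := Real.sin_pos_of_pos_of_lt_pi hθ.1 (by linarith [hθ.2, Real.pi_pos])
  have hspec := trapezeSpec_eq hc.ne' hs.ne'
  refine ⟨hspec, ⟨by simp [hspec], by positivity⟩, ?_⟩
  rintro x ⟨hx, hx0⟩
  rw [hspec] at hx
  rcases hx with rfl | rfl | rfl
  exacts [absurd rfl hx0, le_rfl, two_mul_cos_le_one_div_cos_mul_sin_sq hc hs.ne']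
end
end

section
/- Spectrum of an equilateral star-shaped graph: let n ≥ 2 and ℓ > 0. Then the set of λ ∈ ℝ for which there exists a nonzero pair (α, β) ∈ ℝ × ℝ^n satisfying λ(α + β_i) = β_i/ℓ for all 1 ≤ i ≤ n and λ α = −(1/ℓ) ∑_{i=1}^n β_i, equals {0, 1/ℓ, (1+n)/ℓ}. -/
/-!
Rescaling by `ℓ` turns the system into `μ (α + βᵢ) = βᵢ`, `μ α = -∑ βᵢ` with `μ = λ ℓ`.
For `μ ∉ {0, 1}` the endpoint equations force `βᵢ (1 - μ) = μ α` for every `i`, so summing them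
and using the center equation gives `μ α (1 + n - μ) = 0` with `α ≠ 0`, i.e. `μ = 1 + n`.
Conversely `μ = 0`, `μ = 1` and `μ = 1 + n` are realised by a constant function, by a function
vanishing at the center with `β = eᵢ - eⱼ`, and by `α = n`, `βᵢ = -(1 + n)`.
-/

open Finset

variable {K ι : Type*} [Field K] [Fintype ι]

variable (ι) in
def IsStarEigenvalue (μ : K) : Prop :=
  ∃ (α : K) (β : ι → K), (α, β) ≠ 0 ∧ (∀ i, μ * (α + β i) = β i) ∧ μ * α = -∑ i, β i

theorem IsStarEigenvalue.eq_zero_or_eq_one_or_eq_one_add_card {μ : K}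
    (h : IsStarEigenvalue ι μ) : μ = 0 ∨ μ = 1 ∨ μ = 1 + Fintype.card ι := by
  obtain ⟨α, β, hne, hβ, hα⟩ := h
  rcases eq_or_ne μ 0 with h0 | h0
  · exact Or.inl h0
  rcases eq_or_ne μ 1 with h1 | h1
  · exact Or.inr (Or.inl h1)
  have key : ∀ i, β i * (1 - μ) = μ * α := fun i => by linear_combination -(hβ i)
  have hsum : (∑ i, β i) * (1 - μ) = Fintype.card ι * (μ * α) := by
    rw [sum_mul, sum_congr rfl fun i _ => key i, sum_const, nsmul_eq_mul, card_univ]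
  have hα0 : α ≠ 0 := by
    rintro rfl
    refine hne (Prod.ext rfl (funext fun i => ?_))
    simpa [sub_eq_zero, Ne.symm h1] using key i
  have hprod : μ * α * (1 + Fintype.card ι - μ) = 0 := by
    linear_combination (1 - μ) * hα - hsum
  simp only [mul_eq_zero, h0, hα0, sub_eq_zero, false_or] at hprod
  exact Or.inr (Or.inr hprod.symm)

theorem isStarEigenvalue_zero : IsStarEigenvalue ι (0 : K) :=
  ⟨1, 0, by simp, by simp, by simp⟩

theorem isStarEigenvalue_one [Nontrivial ι] [DecidableEq ι] : IsStarEigenvalue ι (1 : K) := by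
  obtain ⟨i, j, hij⟩ := exists_pair_ne ι
  refine ⟨0, Pi.single i 1 - Pi.single j 1, fun h => ?_, by simp, ?_⟩
  · simpa [hij] using congr_fun (congr_arg Prod.snd h) i
  · simp [sum_sub_distrib]

theorem isStarEigenvalue_one_add_card [Nonempty ι] :
    IsStarEigenvalue ι (1 + Fintype.card ι : K) := by
  refine ⟨Fintype.card ι, fun _ => -(1 + Fintype.card ι), fun h => ?_,
    fun i => by ring, by simp only [sum_const, card_univ, nsmul_eq_mul]; ring⟩
  obtain ⟨i⟩ := ‹Nonempty ι›
  have hα := congr_arg Prod.fst h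
  have hβ := congr_fun (congr_arg Prod.snd h) i
  simp only [Prod.fst_zero, Prod.snd_zero, Pi.zero_apply] at hα hβ
  exact one_ne_zero (by linear_combination -hβ - hα : (1 : K) = 0)

theorem isStarEigenvalue_iff [Nontrivial ι] {μ : K} :
    IsStarEigenvalue ι μ ↔ μ = 0 ∨ μ = 1 ∨ μ = 1 + Fintype.card ι := by
  classical
  refine ⟨IsStarEigenvalue.eq_zero_or_eq_one_or_eq_one_add_card, ?_⟩
  rintro (rfl | rfl | rfl)
  exacts [isStarEigenvalue_zero, isStarEigenvalue_one, isStarEigenvalue_one_add_card]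

theorem star_equations_iff_scaled {ℓ : K} (hℓ : ℓ ≠ 0) (lam α : K) (β : ι → K) :
    ((∀ i, lam * (α + β i) = β i / ℓ) ∧ lam * α = -(1 / ℓ) * ∑ i, β i) ↔
      (∀ i, lam * ℓ * (α + β i) = β i) ∧ lam * ℓ * α = -∑ i, β i := by
  simp only [mul_right_comm lam ℓ, ← eq_div_iff hℓ, neg_div, one_div, neg_mul, inv_mul_eq_div]

/-- **Spectrum of an equilateral star-shaped graph**: for `n ≥ 2` edges all of the same
length `ℓ > 0`, the set of `λ ∈ ℝ` admitting a nonzero piecewise-affine eigenfunction —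
encoded by `(α, β)` where the eigenfunction equals `α + t βᵢ` on the `i`-th edge, with
eigenvalue equations `λ(α + βᵢ) = βᵢ/ℓ` at each endpoint and `λ α = −(1/ℓ) ∑ᵢ βᵢ` at the
center — is exactly `{0, 1/ℓ, (1+n)/ℓ}`. -/
theorem star_graph_spectrum (n : ℕ) (hn : 2 ≤ n) (ℓ : ℝ) (hℓ : 0 < ℓ) :
    { lam : ℝ | ∃ (α : ℝ) (β : Fin n → ℝ), (α, β) ≠ 0 ∧
        (∀ i, lam * (α + β i) = β i / ℓ) ∧ lam * α = -(1 / ℓ) * ∑ i, β i } =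
      {0, 1 / ℓ, (1 + n) / ℓ} := by
  have : Nontrivial (Fin n) := Fin.nontrivial_iff_two_le.2 hn
  ext lam
  simp only [Set.mem_ofPred_eq, star_equations_iff_scaled hℓ.ne']
  change IsStarEigenvalue (Fin n) (lam * ℓ) ↔ _
  rw [isStarEigenvalue_iff, Fintype.card_fin]
  simp only [Set.mem_insert_iff, Set.mem_singleton_iff, ← eq_div_iff hℓ.ne', zero_div]
end
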